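/- arXiv:2302.08133 — 6 statements merged into one kernel-verified Lean document; each statement's English description precedes it below -/
import Mathlib

section
/- For all real numbers α and γ, the operator L_γ applied to the radial function x^α (where x = 1-ρ²) yields (2α+γ+1)² x^α - 4α(γ+α) x^{α-1}. In particular, L_γ(x^α) has the same leading order x^α as x → 0 if and only if α ∈ {0, -γ}. -/
open Real

lemma hd1 (α : ℝ) {r : ℝ} (h : 1 - r ^ 2 ≠ 0) :
    HasDerivAt (fun r : ℝ => (1 - r ^ 2) ^ α) (α * (1 - r ^ 2) ^ (α - 1) * (-2 * r)) r := by
  have h1 : HasDerivAt (fun r : ℝ => 1 - r ^ 2) (-2 * r) r := by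
    simpa using ((hasDerivAt_pow 2 r).const_sub 1)
  exact (Real.hasDerivAt_rpow_const (p := α) (Or.inl h)).comp r h1

/-- `L_γ (x^α) = (2α+γ+1)² x^α - 4α(γ+α) x^{α-1}` where `x = 1-ρ²`,
for the radial operator `L_γ f = -x f'' - (1/ρ - (3+2γ)ρ) f' + (γ+1)² f`.
In particular, the more singular coefficient `4α(γ+α)` vanishes iff `α ∈ {0, -γ}`. -/
theorem Lgamma_on_xpow (α γ : ℝ) :
    (∀ ρ : ℝ, ρ ∈ Set.Ioo (0 : ℝ) 1 →
      -(1 - ρ ^ 2) * iteratedDeriv 2 (fun r : ℝ => (1 - r ^ 2) ^ α) ρ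
        - (1 / ρ - (3 + 2 * γ) * ρ) * deriv (fun r : ℝ => (1 - r ^ 2) ^ α) ρ
        + (γ + 1) ^ 2 * (1 - ρ ^ 2) ^ α
      = (2 * α + γ + 1) ^ 2 * (1 - ρ ^ 2) ^ α
        - 4 * α * (γ + α) * (1 - ρ ^ 2) ^ (α - 1))
    ∧ (4 * α * (γ + α) = 0 ↔ α = 0 ∨ α = -γ) := by
  constructor
  · intro ρ hρ
    obtain ⟨h0, h1⟩ := hρ
    have hx : 0 < 1 - ρ ^ 2 := by nlinarith
    have hxne : 1 - ρ ^ 2 ≠ 0 := ne_of_gt hx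
    set g : ℝ → ℝ := fun r => α * (1 - r ^ 2) ^ (α - 1) * (-2 * r) with hg
    have hdf : deriv (fun r : ℝ => (1 - r ^ 2) ^ α) ρ = g ρ := (hd1 α hxne).deriv
    have hev : (deriv (fun r : ℝ => (1 - r ^ 2) ^ α)) =ᶠ[nhds ρ] g := by
      have hopen : IsOpen {r : ℝ | 1 - r ^ 2 ≠ 0} :=
        isOpen_ne.preimage (by continuity)
      filter_upwards [hopen.mem_nhds hxne] with r hr
      exact (hd1 α hr).deriv
    have hdg : HasDerivAt g
        (α * ((α - 1) * (1 - ρ ^ 2) ^ (α - 1 - 1) * (-2 * ρ)) * (-2 * ρ)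
          + α * (1 - ρ ^ 2) ^ (α - 1) * (-2)) ρ := by
      have h1 : HasDerivAt (fun r : ℝ => (1 - r ^ 2) ^ (α - 1))
          ((α - 1) * (1 - ρ ^ 2) ^ (α - 1 - 1) * (-2 * ρ)) ρ := hd1 (α - 1) hxne
      have h2 : HasDerivAt (fun r : ℝ => -2 * r) (-2 : ℝ) ρ := by
        simpa using (hasDerivAt_id ρ).const_mul (-2 : ℝ)
      simpa [hg, Pi.mul_def, mul_assoc, mul_comm, mul_left_comm] using
        ((h1.const_mul α).mul h2)
    have h2d : iteratedDeriv 2 (fun r : ℝ => (1 - r ^ 2) ^ α) ρ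
        = α * ((α - 1) * (1 - ρ ^ 2) ^ (α - 1 - 1) * (-2 * ρ)) * (-2 * ρ)
          + α * (1 - ρ ^ 2) ^ (α - 1) * (-2) := by
      rw [iteratedDeriv_succ, iteratedDeriv_one]
      rw [Filter.EventuallyEq.deriv_eq hev]
      exact hdg.deriv
    rw [h2d, hdf]
    simp only [hg]
    have e0 : α - 1 - 1 = α - 2 := by ring
    have e1 : (1 - ρ ^ 2) ^ α = (1 - ρ ^ 2) ^ (α - 2) * (1 - ρ ^ 2) * (1 - ρ ^ 2) := by
      rw [show α = α - 2 + 1 + 1 by ring, Real.rpow_add hx, Real.rpow_add hx, Real.rpow_one]; ring_nf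
    have e2 : (1 - ρ ^ 2) ^ (α - 1) = (1 - ρ ^ 2) ^ (α - 2) * (1 - ρ ^ 2) := by
      rw [show α - 1 = α - 2 + 1 by ring, Real.rpow_add hx, Real.rpow_one]
    rw [e0, e1, e2]
    have hρ0 : ρ ≠ 0 := ne_of_gt h0
    generalize (1 - ρ ^ 2) ^ (α - 2) = y
    field_simp
    ring
  · constructor
    · intro h
      rcases mul_eq_zero.mp h with h' | h'
      · rcases mul_eq_zero.mp h' with h'' | h''
        · norm_num at h''
        · exact Or.inl h''
      · right; linarith
    · rintro (rfl | rfl) <;> ring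
end

section
/- For every real γ and every smooth function f on the open unit disk, L_γ(x^{-γ} f) = x^{-γ} L_{-γ}(f), where x = 1-ρ². That is, the intertwining identity L_γ ∘ x^{-γ} = x^{-γ} ∘ L_{-γ} holds on smooth functions on the open disk. -/
open Real
open Set

/-- The operator `L_γ` in polar coordinates `(ρ, ω)` on the unit disk, `x = 1-ρ²`:
`L_γ f = -x ∂_ρ² f - (1/ρ - (3+2γ)ρ)∂_ρ f - (1/ρ²)∂_ω² f + (γ+1)² f`. -/
noncomputable def Lop (γ : ℝ) (f : ℝ → ℝ → ℝ) (ρ ω : ℝ) : ℝ :=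
  -(1 - ρ ^ 2) * iteratedDeriv 2 (fun r => f r ω) ρ
    - (1 / ρ - (3 + 2 * γ) * ρ) * deriv (fun r => f r ω) ρ
    - (1 / ρ ^ 2) * iteratedDeriv 2 (fun w => f ρ w) ω
    + (γ + 1) ^ 2 * f ρ ω

/-- the intertwining identity `L_γ ∘ x^{-γ} = x^{-γ} ∘ L_{-γ}` holds on
smooth functions on the open unit disk (in polar coordinates, `0 < ρ < 1`). -/
theorem Lgamma_intertwine (γ : ℝ) (f : ℝ → ℝ → ℝ)
    (hf : ContDiffOn ℝ (⊤ : ℕ∞) (fun p : ℝ × ℝ => f p.1 p.2) {p : ℝ × ℝ | 0 < p.1 ∧ p.1 < 1}) :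
    ∀ ρ ω : ℝ, 0 < ρ → ρ < 1 →
      Lop γ (fun r w => (1 - r ^ 2) ^ (-γ) * f r w) ρ ω
        = (1 - ρ ^ 2) ^ (-γ) * Lop (-γ) f ρ ω := by
  intro ρ ω hρ0 hρ1
  have hf' : ContDiffOn ℝ (⊤ : ℕ∞) (fun p : ℝ × ℝ => f p.1 p.2)
      {p : ℝ × ℝ | 0 < p.1 ∧ p.1 < 1} := hf.of_le (by simp)
  set S : Set ℝ := Ioo 0 1 with hSdef
  have hSopen : IsOpen S := isOpen_Ioo
  have hρS : ρ ∈ S := ⟨hρ0, hρ1⟩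
  have hSnhds : S ∈ nhds ρ := hSopen.mem_nhds hρS
  -- smoothness of slices
  have hF : ContDiffOn ℝ (⊤ : ℕ∞) (fun r => f r ω) S := by
    have h1 : ContDiff ℝ (⊤ : ℕ∞) (fun r : ℝ => (r, ω)) := contDiff_id.prodMk contDiff_const
    exact hf'.comp (h1.contDiffOn (s := S)) (fun r hr => ⟨hr.1, hr.2⟩)
  have hG : ContDiff ℝ (⊤ : ℕ∞) (fun w => f ρ w) := by
    have h1 : ContDiff ℝ (⊤ : ℕ∞) (fun w : ℝ => (ρ, w)) := contDiff_const.prodMk contDiff_id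
    have := hf'.comp (h1.contDiffOn (s := univ)) (fun w _ => ⟨hρ0, hρ1⟩)
    rw [contDiffOn_univ] at this
    exact this
  have hF' : ContDiffOn ℝ (⊤ : ℕ∞) (deriv fun r => f r ω) S :=
    ((contDiffOn_infty_iff_deriv_of_isOpen hSopen).mp hF).2
  -- x positivity
  have hx : ∀ r ∈ S, (0:ℝ) < 1 - r ^ 2 := by
    intro r hr
    nlinarith [hr.1, hr.2]
  -- the weight function and its derivatives
  set g : ℝ → ℝ := fun r => (1 - r ^ 2) ^ (-γ) with hgdef
  set g1 : ℝ → ℝ := fun r => 2 * γ * r * (1 - r ^ 2) ^ (-γ - 1) with hg1def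
  set g2 : ℝ → ℝ := fun r =>
    2 * γ * (1 - r ^ 2) ^ (-γ - 1) + 4 * γ * (γ + 1) * r ^ 2 * (1 - r ^ 2) ^ (-γ - 2) with hg2def
  have hbase : ∀ r : ℝ, HasDerivAt (fun s : ℝ => 1 - s ^ 2) (-(2 * r)) r := by
    intro r
    simpa using ((hasDerivAt_pow 2 r).const_sub 1)
  have hg : ∀ r ∈ S, HasDerivAt g (g1 r) r := by
    intro r hr
    have h := (hbase r).rpow_const (p := -γ) (Or.inl (ne_of_gt (hx r hr)))
    convert h using 1
    simp only [hg1def]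
    ring
  have hg1 : ∀ r ∈ S, HasDerivAt g1 (g2 r) r := by
    intro r hr
    have h1 := (hbase r).rpow_const (p := -γ - 1) (Or.inl (ne_of_gt (hx r hr)))
    have h2 : HasDerivAt (fun s : ℝ => 2 * γ * s) (2 * γ) r := by
      simpa using (hasDerivAt_id r).const_mul (2 * γ)
    have h : HasDerivAt (fun y => 2 * γ * y * (1 - y ^ 2) ^ (-γ - 1)) _ r := h2.mul h1
    convert h using 1
    have he : -γ - 1 - 1 = -γ - 2 := by ring
    simp only [hg2def, he]
    ring
  -- differentiability facts for F = f(·, ω)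
  set F : ℝ → ℝ := fun r => f r ω with hFdef
  have hFdiff : ∀ r ∈ S, HasDerivAt F (deriv F r) r := by
    intro r hr
    exact ((hF.contDiffAt (hSopen.mem_nhds hr)).differentiableAt (by simp)).hasDerivAt
  have hF'diff : HasDerivAt (deriv F) (iteratedDeriv 2 F ρ) ρ := by
    have := ((hF'.contDiffAt hSnhds).differentiableAt (by simp)).hasDerivAt
    rwa [show deriv (deriv F) ρ = iteratedDeriv 2 F ρ by
      rw [iteratedDeriv_succ, iteratedDeriv_one]] at this
  -- first derivative of g * F on S
  have hprod : ∀ r ∈ S, deriv (fun s => g s * F s) r = g1 r * F r + g r * deriv F r := by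
    intro r hr
    exact ((hg r hr).mul (hFdiff r hr)).deriv
  -- second derivative of g * F at ρ
  have h2nd : iteratedDeriv 2 (fun s => g s * F s) ρ
      = g2 ρ * F ρ + 2 * g1 ρ * deriv F ρ + g ρ * iteratedDeriv 2 F ρ := by
    rw [iteratedDeriv_succ, iteratedDeriv_one]
    have heq : deriv (fun s => g s * F s) =ᶠ[nhds ρ] fun r => g1 r * F r + g r * deriv F r :=
      Filter.eventuallyEq_of_mem hSnhds hprod
    rw [heq.deriv_eq]
    have h := ((hg1 ρ hρS).mul (hFdiff ρ hρS)).add ((hg ρ hρS).mul hF'diff)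
    rw [show deriv (fun r => g1 r * F r + g r * deriv F r) ρ = _ from h.deriv]
    ring
  -- the ω slice
  have hωslice : iteratedDeriv 2 (fun w => g ρ * f ρ w) ω
      = g ρ * iteratedDeriv 2 (fun w => f ρ w) ω := by
    have hd1 : deriv (fun w => g ρ * f ρ w) = fun w => g ρ * deriv (fun w => f ρ w) w := by
      funext w
      exact deriv_const_mul _ ((hG.differentiable (by simp)) w)
    have hGd : Differentiable ℝ (deriv fun w => f ρ w) :=
      ((contDiff_infty_iff_deriv.mp hG).2).differentiable (by simp)
    rw [iteratedDeriv_succ, iteratedDeriv_one, hd1, iteratedDeriv_succ, iteratedDeriv_one,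
      deriv_const_mul _ (hGd ω)]
  -- assemble
  have hd1 : deriv (fun r => g r * F r) ρ = g1 ρ * F ρ + g ρ * deriv F ρ := hprod ρ hρS
  have hxρ : (0:ℝ) < 1 - ρ ^ 2 := hx ρ hρS
  have hA1 : (1 - ρ ^ 2) ^ (-γ - 1) = (1 - ρ ^ 2) ^ (-γ - 2) * (1 - ρ ^ 2) := by
    rw [← Real.rpow_add_one hxρ.ne']
    congr 1
    ring
  have hA0 : (1 - ρ ^ 2) ^ (-γ) = (1 - ρ ^ 2) ^ (-γ - 1) * (1 - ρ ^ 2) := by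
    rw [← Real.rpow_add_one hxρ.ne']
    congr 1
    ring
  simp only [Lop]
  rw [show (fun r => (1 - r ^ 2) ^ (-γ) * f r ω) = fun r => g r * F r from rfl,
    show (fun w => (1 - ρ ^ 2) ^ (-γ) * f ρ w) = fun w => g ρ * f ρ w from rfl,
    h2nd, hd1, hωslice]
  simp only [hgdef, hg1def, hg2def, hFdef]
  rw [hA1, hA0, hA1]
  have hρne : ρ ≠ 0 := ne_of_gt hρ0
  field_simp
  ring
end

section
/- Fix γ > 0 (one may take γ ∈ (0,1)) and s > γ + 1. For m ≥ 0 define C_m = ⟨m⟩^{2s-2γ-2} ∑_{ℓ≥0} (m+2ℓ+1+γ)^{1-2s} · (Γ(m+ℓ+γ+1)/Γ(m+ℓ+1)) · (Γ(ℓ+γ+1)/Γ(ℓ+1)), where ⟨m⟩ = (1+m²)^{1/2}. Then there exist constants 0 < C' ≤ C'' such that C' ≤ C_m ≤ C'' for all m ≥ 0. -/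
open Real

lemma mul3_mono {a b c a' b' c' : ℝ} (ha : 0 ≤ a) (hb : 0 ≤ b) (hc : 0 ≤ c)
    (h1 : a ≤ a') (h2 : b ≤ b') (h3 : c ≤ c') : a * b * c ≤ a' * b' * c' := by
  have ha' := ha.trans h1
  have hb' := hb.trans h2
  exact mul_le_mul (mul_le_mul h1 h2 hb ha') h3 hc (mul_nonneg ha' hb')

lemma step_ineq (q : ℝ) (hq : 0 < q) (a : ℝ) (ha : 0 < a) :
    q * (a+1) ^ (-q-1) ≤ a ^ (-q) - (a+1) ^ (-q) := by
  have hab : a < a + 1 := by linarith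
  have hcont : ContinuousOn (fun t : ℝ => t ^ (-q)) (Set.Icc a (a+1)) := by
    intro x hx
    have hx0 : x ≠ 0 := ne_of_gt (lt_of_lt_of_le ha hx.1)
    exact (Real.continuousAt_rpow_const x (-q) (Or.inl hx0)).continuousWithinAt
  have hderiv : ∀ x ∈ Set.Ioo a (a+1),
      HasDerivAt (fun t : ℝ => t ^ (-q)) ((-q) * x ^ (-q-1)) x := by
    intro x hx
    have hx0 : x ≠ 0 := ne_of_gt (lt_trans ha hx.1)
    exact Real.hasDerivAt_rpow_const (Or.inl hx0)
  obtain ⟨c, hc, hceq⟩ := exists_hasDerivAt_eq_slope (fun t : ℝ => t ^ (-q))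
    (fun x => (-q) * x ^ (-q-1)) hab hcont hderiv
  have hc1 : c ≤ a + 1 := hc.2.le
  have hc0 : 0 < c := lt_trans ha hc.1
  have hmono : (a+1) ^ (-q-1) ≤ c ^ (-q-1) :=
    Real.rpow_le_rpow_of_nonpos hc0 hc1 (by linarith)
  have : (-q) * c ^ (-q-1) = ((a+1) ^ (-q) - a ^ (-q)) / (a + 1 - a) := hceq
  rw [show a + 1 - a = 1 by ring, div_one] at this
  nlinarith [this, hmono, hq]

lemma tail_bound (β : ℝ) (hβ : β < -1) : ∃ C : ℝ, 0 < C ∧ ∀ m : ℕ,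
    Summable (fun j : ℕ => ((m:ℝ)+j+1)^β) ∧
    ∑' j : ℕ, ((m:ℝ)+j+1)^β ≤ C * ((m:ℝ)+1)^(β+1) := by
  set q : ℝ := -(β+1) with hqdef
  have hq : 0 < q := by simp only [hqdef]; linarith
  have hβq : β = -q - 1 := by simp only [hqdef]; ring
  refine ⟨(2:ℝ)^(-β)/q * 2^q, by positivity, fun m => ?_⟩
  set g : ℕ → ℝ := fun j => ((m:ℝ)+j+1/2)^(-q) with hg
  have hterm : ∀ j : ℕ, ((m:ℝ)+j+1)^β ≤ (2:ℝ)^(-β)/q * (g j - g (j+1)) := by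
    intro j
    have hstep := step_ineq q hq ((m:ℝ)+j+1/2) (by positivity)
    have hgj1 : g (j+1) = ((m:ℝ)+j+1/2+1)^(-q) := by simp only [hg]; push_cast; ring_nf
    have h1 : ((m:ℝ)+j+1)^β ≤ (2:ℝ)^(-β) * ((m:ℝ)+j+1/2+1)^β := by
      have hb : ((m:ℝ)+j+1/2+1)/2 ≤ (m:ℝ)+j+1 := by
        have : (0:ℝ) ≤ (m:ℝ)+j := by positivity
        linarith
      have := Real.rpow_le_rpow_of_nonpos (by positivity) hb (by linarith : β ≤ 0)
      calc ((m:ℝ)+j+1)^β ≤ (((m:ℝ)+j+1/2+1)/2)^β := this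
        _ = ((m:ℝ)+j+1/2+1)^β / 2^β := by
            rw [Real.div_rpow (by positivity) (by norm_num : (0:ℝ) ≤ 2)]
        _ = (2:ℝ)^(-β) * ((m:ℝ)+j+1/2+1)^β := by
            rw [Real.rpow_neg (by norm_num)]; field_simp
    calc ((m:ℝ)+j+1)^β ≤ (2:ℝ)^(-β) * ((m:ℝ)+j+1/2+1)^β := h1
      _ ≤ (2:ℝ)^(-β) * ((g j - g (j+1))/q) := by
          apply mul_le_mul_of_nonneg_left _ (by positivity)
          have hgj : g j = ((m:ℝ)+j+1/2)^(-q) := rfl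
          rw [le_div_iff₀ hq, hgj1, hgj, hβq]
          nlinarith [hstep]
      _ = (2:ℝ)^(-β)/q * (g j - g (j+1)) := by ring
  have hg0 : g 0 ≤ (2:ℝ)^q * ((m:ℝ)+1)^(-q) := by
    have hb : ((m:ℝ)+1)/2 ≤ (m:ℝ)+(0:ℕ)+1/2 := by push_cast; linarith [Nat.cast_nonneg (α := ℝ) m]
    have := Real.rpow_le_rpow_of_nonpos (by positivity) hb (by linarith : -q ≤ 0)
    calc g 0 ≤ (((m:ℝ)+1)/2)^(-q) := this
      _ = ((m:ℝ)+1)^(-q) / 2^(-q) := by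
            rw [Real.div_rpow (by positivity) (by norm_num : (0:ℝ) ≤ 2)]
      _ = (2:ℝ)^q * ((m:ℝ)+1)^(-q) := by
          rw [Real.rpow_neg (by norm_num : (0:ℝ) ≤ 2)]; field_simp
  have hpartial : ∀ N : ℕ, ∑ j ∈ Finset.range N, ((m:ℝ)+j+1)^β ≤ (2:ℝ)^(-β)/q * 2^q * ((m:ℝ)+1)^(β+1) := by
    intro N
    have h2 : ∑ j ∈ Finset.range N, ((m:ℝ)+j+1)^β ≤ (2:ℝ)^(-β)/q * (g 0 - g N) := by
      calc ∑ j ∈ Finset.range N, ((m:ℝ)+j+1)^β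
          ≤ ∑ j ∈ Finset.range N, (2:ℝ)^(-β)/q * (g j - g (j+1)) :=
            Finset.sum_le_sum fun j _ => hterm j
        _ = (2:ℝ)^(-β)/q * ∑ j ∈ Finset.range N, (g j - g (j+1)) := by
            rw [Finset.mul_sum]
        _ = (2:ℝ)^(-β)/q * (g 0 - g N) := by rw [Finset.sum_range_sub' g N]
    have hgN : 0 ≤ g N := by positivity
    have h3 : (2:ℝ)^(-β)/q * (g 0 - g N) ≤ (2:ℝ)^(-β)/q * g 0 := by
      apply mul_le_mul_of_nonneg_left (by linarith) (by positivity)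
    have h4 : (2:ℝ)^(-β)/q * g 0 ≤ (2:ℝ)^(-β)/q * ((2:ℝ)^q * ((m:ℝ)+1)^(-q)) :=
      mul_le_mul_of_nonneg_left hg0 (by positivity)
    have : β + 1 = -q := by rw [hβq]; ring
    rw [this]
    calc ∑ j ∈ Finset.range N, ((m:ℝ)+j+1)^β ≤ (2:ℝ)^(-β)/q * (g 0 - g N) := h2
      _ ≤ (2:ℝ)^(-β)/q * ((2:ℝ)^q * ((m:ℝ)+1)^(-q)) := le_trans h3 h4
      _ = (2:ℝ)^(-β)/q * 2^q * ((m:ℝ)+1)^(-q) := by ring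
  have hnn : ∀ j : ℕ, 0 ≤ ((m:ℝ)+j+1)^β := fun j => by positivity
  exact ⟨summable_of_sum_range_le hnn hpartial, Real.tsum_le_of_sum_range_le hnn hpartial⟩

lemma Gamma_prod (x : ℝ) (hx : 0 < x) (n : ℕ) :
    Real.Gamma (x + n) = Real.Gamma x * ∏ j ∈ Finset.range n, (x + j) := by
  induction n with
  | zero => simp
  | succ n ih =>
    have hxn : x + (n:ℝ) ≠ 0 := by positivity
    have : ((n+1:ℕ):ℝ) = (n:ℝ) + 1 := by push_cast; ring
    rw [this, show x + ((n:ℝ)+1) = (x + n) + 1 by ring, Real.Gamma_add_one hxn, ih,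
      Finset.prod_range_succ]
    ring

lemma Gamma_combo {a b t : ℝ} (ha : 0 < a) (hb : 0 < b) (ht0 : 0 ≤ t) (ht1 : t ≤ 1) :
    Real.Gamma (t*a + (1-t)*b) ≤ (Real.Gamma a)^t * (Real.Gamma b)^(1-t) := by
  have hcombo : 0 < t*a + (1-t)*b := by
    rcases eq_or_lt_of_le ht0 with h|h
    · rw [← h]; simpa using hb
    · nlinarith [mul_pos h ha, mul_nonneg (sub_nonneg.2 ht1) hb.le]
  have h := Real.convexOn_log_Gamma.2 (Set.mem_Ioi.2 ha) (Set.mem_Ioi.2 hb) ht0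
    (show (0:ℝ) ≤ 1 - t by linarith) (show t + (1-t) = 1 by ring)
  simp only [Function.comp_apply, smul_eq_mul] at h
  have hGa := Real.Gamma_pos_of_pos ha
  have hGb := Real.Gamma_pos_of_pos hb
  have hGc := Real.Gamma_pos_of_pos hcombo
  calc Real.Gamma (t*a + (1-t)*b) = Real.exp (Real.log (Real.Gamma (t*a+(1-t)*b))) :=
        (Real.exp_log hGc).symm
    _ ≤ Real.exp (t * Real.log (Real.Gamma a) + (1-t) * Real.log (Real.Gamma b)) :=
        Real.exp_le_exp.2 h
    _ = (Real.Gamma a)^t * (Real.Gamma b)^(1-t) := by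
        rw [Real.exp_add, Real.rpow_def_of_pos hGa, Real.rpow_def_of_pos hGb]
        ring_nf

lemma gammaRatio_bounds (γ : ℝ) (hγ : 0 < γ) :
    ∃ c C : ℝ, 0 < c ∧ 0 < C ∧ ∀ x : ℝ, 1 ≤ x →
      c * x^γ ≤ Real.Gamma (x+γ) / Real.Gamma x ∧
      Real.Gamma (x+γ) / Real.Gamma x ≤ C * x^γ := by
  set n : ℕ := ⌈γ⌉₊ with hn
  have hn1 : 1 ≤ n := Nat.one_le_ceil_iff.2 hγ
  have hγn : γ ≤ (n:ℝ) := Nat.le_ceil γ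
  have hnγ : (n:ℝ) < γ + 1 := Nat.ceil_lt_add_one hγ.le
  have hnpos : (0:ℝ) < n := by exact_mod_cast hn1
  set θ : ℝ := γ / n with hθ
  have hθ0 : 0 ≤ θ := by positivity
  have hθ1 : θ ≤ 1 := by rw [hθ, div_le_one hnpos]; exact hγn
  have hθn : θ * (n:ℝ) = γ := by rw [hθ]; field_simp
  refine ⟨((1:ℝ)/(1+γ+n))^((n:ℝ)-γ), (1+(n:ℝ))^γ, by positivity, by positivity, fun x hx => ?_⟩
  have hx0 : (0:ℝ) < x := lt_of_lt_of_le one_pos hx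
  have hGx := Real.Gamma_pos_of_pos hx0
  have hxγ0 : (0:ℝ) < x + γ := by linarith
  have hGxγ := Real.Gamma_pos_of_pos hxγ0
  have hxn0 : (0:ℝ) < x + n := by linarith
  have hxγn0 : (0:ℝ) < x + γ + n := by linarith
  -- products
  have hProdUp : ∀ y : ℝ, 0 < y → Real.Gamma (y + n) ≤ Real.Gamma y * (y+n)^(n:ℕ) := by
    intro y hy
    rw [Gamma_prod y hy n]
    have : ∏ j ∈ Finset.range n, (y + j) ≤ (y+n)^(n:ℕ) := by
      calc ∏ j ∈ Finset.range n, (y + j) ≤ ∏ j ∈ Finset.range n, (y+n) := by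
            apply Finset.prod_le_prod
            · intro j _; positivity
            · intro j hj
              have : (j:ℝ) ≤ (n:ℝ) := by
                exact_mod_cast le_of_lt (Finset.mem_range.1 hj)
              linarith
        _ = (y+n)^(n:ℕ) := by rw [Finset.prod_const, Finset.card_range]
    nlinarith [Real.Gamma_pos_of_pos hy]
  have hProdLow : Real.Gamma x * x^(n:ℕ) ≤ Real.Gamma (x + n) := by
    rw [Gamma_prod x hx0 n]
    have : x^(n:ℕ) ≤ ∏ j ∈ Finset.range n, (x + j) := by
      calc x^(n:ℕ) = ∏ _j ∈ Finset.range n, x := by rw [Finset.prod_const, Finset.card_range]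
        _ ≤ ∏ j ∈ Finset.range n, (x + j) := by
            apply Finset.prod_le_prod
            · intro j _; positivity
            · intro j _
              have : (0:ℝ) ≤ (j:ℝ) := by positivity
              linarith
    nlinarith [hGx]
  constructor
  · -- lower bound
    have hcombo := Gamma_combo hxγ0 hxγn0 hθ0 hθ1
    have hpt : θ*(x+γ) + (1-θ)*(x+γ+(n:ℝ)) = x + n := by linear_combination (-1:ℝ) * hθn
    rw [hpt] at hcombo
    have h4 : (Real.Gamma (x+γ+n))^(1-θ) ≤ (Real.Gamma (x+γ))^(1-θ) * (x+γ+n)^((n:ℝ)-γ) := by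
      have h5 : Real.Gamma (x+γ+n) ≤ Real.Gamma (x+γ) * (x+γ+n)^(n:ℕ) := hProdUp (x+γ) hxγ0
      calc (Real.Gamma (x+γ+n))^(1-θ) ≤ (Real.Gamma (x+γ) * (x+γ+n)^(n:ℕ))^(1-θ) :=
            Real.rpow_le_rpow (Real.Gamma_pos_of_pos (by linarith)).le h5 (by linarith)
        _ = (Real.Gamma (x+γ))^(1-θ) * ((x+γ+n)^(n:ℕ))^(1-θ) :=
            Real.mul_rpow (Real.Gamma_pos_of_pos hxγ0).le (by positivity)
        _ = (Real.Gamma (x+γ))^(1-θ) * (x+γ+n)^((n:ℝ)-γ) := by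
            rw [← Real.rpow_natCast (x+γ+n) n, ← Real.rpow_mul hxγn0.le]
            congr 1
            have : (n:ℝ) * (1-θ) = (n:ℝ) - γ := by linear_combination (-1:ℝ)*hθn
            rw [this]
    have h6 : Real.Gamma (x+n) ≤ Real.Gamma (x+γ) * (x+γ+n)^((n:ℝ)-γ) := by
      calc Real.Gamma (x+n) ≤ (Real.Gamma (x+γ))^θ * (Real.Gamma (x+γ+n))^(1-θ) := hcombo
        _ ≤ (Real.Gamma (x+γ))^θ * ((Real.Gamma (x+γ))^(1-θ) * (x+γ+n)^((n:ℝ)-γ)) := by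
            apply mul_le_mul_of_nonneg_left h4 (by positivity)
        _ = Real.Gamma (x+γ) * (x+γ+n)^((n:ℝ)-γ) := by
            rw [← mul_assoc, ← Real.rpow_add hGxγ]
            norm_num
    -- combine with hProdLow
    have h7 : Real.Gamma x * x^(n:ℕ) ≤ Real.Gamma (x+γ) * (x+γ+n)^((n:ℝ)-γ) :=
      le_trans hProdLow h6
    have hpow : (0:ℝ) < (x+γ+n)^((n:ℝ)-γ) := by positivity
    have h8 : Real.Gamma x * x^(n:ℕ) * (x+γ+n)^(γ-(n:ℝ)) ≤ Real.Gamma (x+γ) := by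
      rw [show γ-(n:ℝ) = -((n:ℝ)-γ) by ring, Real.rpow_neg hxγn0.le,
        mul_assoc, ← div_eq_mul_inv, ← mul_div_assoc, div_le_iff₀ hpow]
      linarith [h7]
    have h9 : ((1:ℝ)/(1+γ+n))^((n:ℝ)-γ) * x^γ ≤ x^(n:ℕ) * (x+γ+n)^(γ-(n:ℝ)) := by
      have hquot : (1:ℝ)/(1+γ+n) ≤ x/(x+γ+n) := by
        rw [div_le_div_iff₀ (by positivity) hxγn0]
        nlinarith
      have h10 : ((1:ℝ)/(1+γ+n))^((n:ℝ)-γ) ≤ (x/(x+γ+n))^((n:ℝ)-γ) :=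
        Real.rpow_le_rpow (by positivity) hquot (by linarith)
      have h11 : (x/(x+γ+n))^((n:ℝ)-γ) = x^((n:ℝ)-γ) * (x+γ+n)^(γ-(n:ℝ)) := by
        rw [Real.div_rpow hx0.le hxγn0.le, show γ-(n:ℝ) = -((n:ℝ)-γ) by ring,
          Real.rpow_neg hxγn0.le, div_eq_mul_inv]
      have h12 : x^(n:ℕ) = x^γ * x^((n:ℝ)-γ) := by
        rw [← Real.rpow_natCast x n, ← Real.rpow_add hx0]; congr 1; ring
      rw [h12]
      calc ((1:ℝ)/(1+γ+n))^((n:ℝ)-γ) * x^γ ≤ (x/(x+γ+n))^((n:ℝ)-γ) * x^γ :=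
            mul_le_mul_of_nonneg_right h10 (by positivity)
        _ = x^γ * x^((n:ℝ)-γ) * (x+γ+n)^(γ-(n:ℝ)) := by rw [h11]; ring
    rw [le_div_iff₀ hGx]
    calc ((1:ℝ)/(1+γ+n))^((n:ℝ)-γ) * x^γ * Real.Gamma x
        ≤ x^(n:ℕ) * (x+γ+n)^(γ-(n:ℝ)) * Real.Gamma x :=
          mul_le_mul_of_nonneg_right h9 hGx.le
      _ = Real.Gamma x * x^(n:ℕ) * (x+γ+n)^(γ-(n:ℝ)) := by ring
      _ ≤ Real.Gamma (x+γ) := h8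
  · -- upper bound
    have hcombo := Gamma_combo hxn0 hx0 hθ0 hθ1
    have hpt : θ*(x+(n:ℝ)) + (1-θ)*x = x + γ := by linear_combination hθn
    rw [hpt] at hcombo
    have h4 : (Real.Gamma (x+n))^θ ≤ (Real.Gamma x)^θ * (x+n)^γ := by
      calc (Real.Gamma (x+n))^θ ≤ (Real.Gamma x * (x+n)^(n:ℕ))^θ :=
            Real.rpow_le_rpow (Real.Gamma_pos_of_pos hxn0).le (hProdUp x hx0) hθ0
        _ = (Real.Gamma x)^θ * ((x+n)^(n:ℕ))^θ := Real.mul_rpow hGx.le (by positivity)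
        _ = (Real.Gamma x)^θ * (x+n)^γ := by
            rw [← Real.rpow_natCast (x+n) n, ← Real.rpow_mul hxn0.le]
            rw [mul_comm ((n:ℝ)) θ, hθn, mul_comm]
    have h6 : Real.Gamma (x+γ) ≤ Real.Gamma x * (x+n)^γ := by
      calc Real.Gamma (x+γ) ≤ (Real.Gamma (x+n))^θ * (Real.Gamma x)^(1-θ) := hcombo
        _ ≤ (Real.Gamma x)^θ * (x+n)^γ * (Real.Gamma x)^(1-θ) :=
            mul_le_mul_of_nonneg_right h4 (by positivity)
        _ = Real.Gamma x * (x+n)^γ := by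
            rw [show (Real.Gamma x)^θ * (x+n)^γ * (Real.Gamma x)^(1-θ)
              = (Real.Gamma x)^θ * (Real.Gamma x)^(1-θ) * (x+n)^γ by ring,
              ← Real.rpow_add hGx]
            norm_num
    have h7 : (x+n)^γ ≤ (1+(n:ℝ))^γ * x^γ := by
      rw [← Real.mul_rpow (by positivity) hx0.le]
      apply Real.rpow_le_rpow hxn0.le _ hγ.le
      nlinarith
    rw [div_le_iff₀ hGx]
    calc Real.Gamma (x+γ) ≤ Real.Gamma x * (x+n)^γ := h6
      _ ≤ Real.Gamma x * ((1+(n:ℝ))^γ * x^γ) := mul_le_mul_of_nonneg_left h7 hGx.le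
      _ = (1+(n:ℝ))^γ * x^γ * Real.Gamma x := by ring

/-- Lemma `lem:Cmbounds`: for `γ > 0` and `s > γ+1`, the quantities
`C_m = ⟨m⟩^{2s-2γ-2} ∑_{ℓ≥0} (m+2ℓ+1+γ)^{1-2s} (Γ(m+ℓ+γ+1)/Γ(m+ℓ+1)) (Γ(ℓ+γ+1)/Γ(ℓ+1))`
are bounded above and below by positive constants uniformly in `m ≥ 0`;
here `⟨m⟩ = (1+m²)^{1/2}` so `⟨m⟩^{2s-2γ-2} = (1+m²)^{s-γ-1}`. -/
theorem Cm_uniform_bounds (γ s : ℝ) (hγ : 0 < γ) (hs : γ + 1 < s) :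
    ∃ C' C'' : ℝ, 0 < C' ∧ C' ≤ C'' ∧
      ∀ m : ℕ,
        C' ≤ (1 + (m : ℝ) ^ 2) ^ (s - γ - 1) *
            ∑' ℓ : ℕ, ((m : ℝ) + 2 * ℓ + 1 + γ) ^ (1 - 2 * s)
              * (Real.Gamma ((m : ℝ) + ℓ + γ + 1) / Real.Gamma ((m : ℝ) + ℓ + 1))
              * (Real.Gamma ((ℓ : ℝ) + γ + 1) / Real.Gamma ((ℓ : ℝ) + 1)) ∧
          (1 + (m : ℝ) ^ 2) ^ (s - γ - 1) *
            ∑' ℓ : ℕ, ((m : ℝ) + 2 * ℓ + 1 + γ) ^ (1 - 2 * s)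
              * (Real.Gamma ((m : ℝ) + ℓ + γ + 1) / Real.Gamma ((m : ℝ) + ℓ + 1))
              * (Real.Gamma ((ℓ : ℝ) + γ + 1) / Real.Gamma ((ℓ : ℝ) + 1))
            ≤ C'' := by
  obtain ⟨c, C, hc, hC, hratio⟩ := gammaRatio_bounds γ hγ
  obtain ⟨C₃, hC₃, htail⟩ := tail_bound (γ - s) (by linarith)
  obtain ⟨C₄, hC₄, htail2⟩ := tail_bound (1-2*s+2*γ) (by linarith)
  have h2s : (1:ℝ) - 2*s < 0 := by linarith
  set F : ℕ → ℕ → ℝ := fun m ℓ =>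
    ((m : ℝ) + 2 * ℓ + 1 + γ) ^ (1 - 2 * s)
      * (Real.Gamma ((m : ℝ) + ℓ + γ + 1) / Real.Gamma ((m : ℝ) + ℓ + 1))
      * (Real.Gamma ((ℓ : ℝ) + γ + 1) / Real.Gamma ((ℓ : ℝ) + 1)) with hF
  -- ratio bounds
  have hRlo : ∀ a : ℝ, 0 ≤ a → c * (a+1)^γ ≤ Real.Gamma (a+γ+1) / Real.Gamma (a+1) := by
    intro a ha
    have h := (hratio (a+1) (by linarith)).1
    rwa [show a+1+γ = a+γ+1 by ring] at h
  have hRhi : ∀ a : ℝ, 0 ≤ a → Real.Gamma (a+γ+1) / Real.Gamma (a+1) ≤ C * (a+1)^γ := by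
    intro a ha
    have h := (hratio (a+1) (by linarith)).2
    rwa [show a+1+γ = a+γ+1 by ring] at h
  have hRpos : ∀ a : ℝ, 0 ≤ a → 0 < Real.Gamma (a+γ+1) / Real.Gamma (a+1) := fun a ha =>
    lt_of_lt_of_le (mul_pos hc (Real.rpow_pos_of_pos (by linarith) γ)) (hRlo a ha)
  have hbase : ∀ m ℓ : ℕ, (0:ℝ) < (m:ℝ) + 2*ℓ + 1 + γ := by
    intro m ℓ
    have h1 : (0:ℝ) ≤ (m:ℝ) := m.cast_nonneg
    have h2 : (0:ℝ) ≤ (ℓ:ℝ) := ℓ.cast_nonneg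
    linarith
  have hmℓ : ∀ m ℓ : ℕ, (0:ℝ) ≤ (m:ℝ) + ℓ := by
    intro m ℓ; positivity
  have hFnn : ∀ m ℓ : ℕ, 0 ≤ F m ℓ := by
    intro m ℓ
    have := hRpos ((m:ℝ)+ℓ) (hmℓ m ℓ)
    have := hRpos ((ℓ:ℝ)) ℓ.cast_nonneg
    have := Real.rpow_nonneg (hbase m ℓ).le (1-2*s)
    positivity
  -- summability
  have hsummodel : Summable (fun ℓ : ℕ => ((ℓ:ℝ)+1)^(1-2*s+2*γ)) := by
    refine ((htail2 0).1).congr fun j => ?_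
    norm_num
  have hsum : ∀ m : ℕ, Summable (F m) := by
    intro m
    apply Summable.of_nonneg_of_le (hFnn m) _ (hsummodel.mul_left (C*C*((m:ℝ)+1)^γ))
    intro ℓ
    have hl1 : (0:ℝ) < (ℓ:ℝ)+1 := by positivity
    have hm1 : (0:ℝ) < (m:ℝ)+1 := by positivity
    calc F m ℓ ≤ ((ℓ:ℝ)+1)^(1-2*s) * (C*(((m:ℝ)+1)*((ℓ:ℝ)+1))^γ) * (C*((ℓ:ℝ)+1)^γ) := by
          apply mul3_mono (Real.rpow_nonneg (hbase m ℓ).le _)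
            (hRpos ((m:ℝ)+ℓ) (hmℓ m ℓ)).le (hRpos ((ℓ:ℝ)) ℓ.cast_nonneg).le
          · apply Real.rpow_le_rpow_of_nonpos hl1 _ h2s.le
            have := ℓ.cast_nonneg (α := ℝ)
            have := m.cast_nonneg (α := ℝ)
            linarith
          · refine le_trans (hRhi ((m:ℝ)+ℓ) (hmℓ m ℓ)) ?_
            apply mul_le_mul_of_nonneg_left _ hC.le
            apply Real.rpow_le_rpow (by positivity) _ hγ.le
            have := ℓ.cast_nonneg (α := ℝ)
            have := m.cast_nonneg (α := ℝ)
            nlinarith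
          · exact hRhi ((ℓ:ℝ)) ℓ.cast_nonneg
      _ = C*C*((m:ℝ)+1)^γ * ((ℓ:ℝ)+1)^(1-2*s+2*γ) := by
          rw [Real.mul_rpow hm1.le hl1.le]
          have hcol : ((ℓ:ℝ)+1)^(1-2*s) * (((ℓ:ℝ)+1)^γ * ((ℓ:ℝ)+1)^γ) = ((ℓ:ℝ)+1)^(1-2*s+2*γ) := by
            rw [← Real.rpow_add hl1, ← Real.rpow_add hl1]
            congr 1; ring
          rw [← hcol]; ring
  have hL : ∀ m : ℕ, (2:ℝ)^(γ+1-s) * ((5+γ)^(1-2*s) * (c*c))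
      ≤ (1 + (m:ℝ)^2)^(s-γ-1) * ∑' ℓ, F m ℓ := by
    intro m
    set B : ℝ := (m:ℝ) + 1 with hB
    have hB0 : (0:ℝ) < B := by rw [hB]; positivity
    set E : ℝ := ((5+γ)^(1-2*s) * B^(1-2*s)) * (c * B^γ) * (c * B^γ) with hE
    have hE0 : 0 ≤ E := by
      rw [hE]
      have h1 := Real.rpow_nonneg (show (0:ℝ) ≤ 5+γ by linarith) (1-2*s)
      have h2 := Real.rpow_nonneg hB0.le (1-2*s)
      have h3 := Real.rpow_nonneg hB0.le γ
      positivity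
    have hterm : ∀ ℓ ∈ Finset.Icc m (2*m+1), E ≤ F m ℓ := by
      intro ℓ hℓ
      obtain ⟨hℓ1, hℓ2⟩ := Finset.mem_Icc.1 hℓ
      have hc1 : (m:ℝ) ≤ (ℓ:ℝ) := by exact_mod_cast hℓ1
      have hc2 : (ℓ:ℝ) ≤ 2*(m:ℝ)+1 := by exact_mod_cast hℓ2
      have hm0 : (0:ℝ) ≤ (m:ℝ) := m.cast_nonneg
      rw [hE]
      apply mul3_mono
      · exact mul_nonneg (Real.rpow_nonneg (by linarith) _) (Real.rpow_nonneg hB0.le _)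
      · exact mul_nonneg hc.le (Real.rpow_nonneg hB0.le _)
      · exact mul_nonneg hc.le (Real.rpow_nonneg hB0.le _)
      · rw [← Real.mul_rpow (by linarith) hB0.le]
        apply Real.rpow_le_rpow_of_nonpos (hbase m ℓ) _ h2s.le
        rw [hB]
        nlinarith [mul_nonneg hγ.le hm0]
      · refine le_trans ?_ (hRlo ((m:ℝ)+ℓ) (hmℓ m ℓ))
        apply mul_le_mul_of_nonneg_left _ hc.le
        apply Real.rpow_le_rpow hB0.le _ hγ.le
        rw [hB]; linarith [ℓ.cast_nonneg (α := ℝ)]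
      · refine le_trans ?_ (hRlo ((ℓ:ℝ)) ℓ.cast_nonneg)
        apply mul_le_mul_of_nonneg_left _ hc.le
        apply Real.rpow_le_rpow hB0.le _ hγ.le
        rw [hB]; linarith
    have hsum_ge : B^(1:ℝ) * E ≤ ∑' ℓ, F m ℓ := by
      have h2 := Finset.card_nsmul_le_sum (Finset.Icc m (2*m+1)) (F m) E hterm
      have h3 : ∑ ℓ ∈ Finset.Icc m (2*m+1), F m ℓ ≤ ∑' ℓ, F m ℓ :=
        Summable.sum_le_tsum _ (fun ℓ _ => hFnn m ℓ) (hsum m)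
      have hcard : (Finset.Icc m (2*m+1)).card = m + 2 := by rw [Nat.card_Icc]; omega
      rw [hcard, nsmul_eq_mul] at h2
      have h4 : B^(1:ℝ) ≤ ((m+2:ℕ):ℝ) := by
        rw [Real.rpow_one, hB]; push_cast; linarith
      have h5 : B^(1:ℝ) * E ≤ ((m+2:ℕ):ℝ) * E := mul_le_mul_of_nonneg_right h4 hE0
      calc B^(1:ℝ) * E ≤ ((m+2:ℕ):ℝ) * E := h5
        _ ≤ ∑ ℓ ∈ Finset.Icc m (2*m+1), F m ℓ := by exact_mod_cast h2
        _ ≤ ∑' ℓ, F m ℓ := h3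
    have hpow1 : B^(2*s-2*γ-2) * (B^(1:ℝ) * (B^(1-2*s) * (B^γ * B^γ))) = 1 := by
      rw [← Real.rpow_add hB0, ← Real.rpow_add hB0, ← Real.rpow_add hB0, ← Real.rpow_add hB0]
      rw [show 2*s-2*γ-2 + (1 + (1-2*s + (γ + γ))) = 0 by ring, Real.rpow_zero]
    have hPL : (2:ℝ)^(γ+1-s) * B^(2*s-2*γ-2) ≤ (1+(m:ℝ)^2)^(s-γ-1) := by
      have h1 : B^(2:ℕ)/2 ≤ 1+(m:ℝ)^2 := by rw [hB]; nlinarith [sq_nonneg ((m:ℝ)-1)]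
      have h2 := Real.rpow_le_rpow (by positivity) h1 (show (0:ℝ) ≤ s-γ-1 by linarith)
      calc (2:ℝ)^(γ+1-s) * B^(2*s-2*γ-2) = (B^(2:ℕ)/2)^(s-γ-1) := by
            rw [Real.div_rpow (by positivity) (by norm_num), ← Real.rpow_natCast B 2,
              ← Real.rpow_mul hB0.le,
              show (2:ℕ) * (s-γ-1) = 2*s-2*γ-2 by push_cast; ring,
              show γ+1-s = -(s-γ-1) by ring, Real.rpow_neg (by norm_num)]
            field_simp
        _ ≤ (1+(m:ℝ)^2)^(s-γ-1) := h2
    have hT0 : 0 ≤ ∑' ℓ, F m ℓ := tsum_nonneg (hFnn m)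
    calc (2:ℝ)^(γ+1-s) * ((5+γ)^(1-2*s) * (c*c))
        = ((2:ℝ)^(γ+1-s) * B^(2*s-2*γ-2)) * (B^(1:ℝ) * E) := by
          rw [hE]
          linear_combination (-(2:ℝ)^(γ+1-s) * ((5+γ)^(1-2*s)) * (c*c)) * hpow1
      _ ≤ ((2:ℝ)^(γ+1-s) * B^(2*s-2*γ-2)) * ∑' ℓ, F m ℓ := by
          apply mul_le_mul_of_nonneg_left hsum_ge
          positivity
      _ ≤ (1+(m:ℝ)^2)^(s-γ-1) * ∑' ℓ, F m ℓ := mul_le_mul_of_nonneg_right hPL hT0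
  have hU : ∀ m : ℕ, (1 + (m:ℝ)^2)^(s-γ-1) * ∑' ℓ, F m ℓ
      ≤ (2:ℝ)^γ*(C*C) + (2:ℝ)^γ*(C*C)*C₃ := by
    intro m
    set B : ℝ := (m:ℝ) + 1 with hB
    have hB0 : (0:ℝ) < B := by rw [hB]; positivity
    have hBγ : (0:ℝ) ≤ B^γ := Real.rpow_nonneg hB0.le γ
    set H : ℝ := B^(1-2*s) * (C*((2:ℝ)^γ*B^γ)) * (C*B^γ) with hH
    have h2γ : (0:ℝ) ≤ (2:ℝ)^γ := Real.rpow_nonneg (by norm_num) γ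
    have hH0 : 0 ≤ H := by
      rw [hH]
      exact mul_nonneg (mul_nonneg (Real.rpow_nonneg hB0.le _)
        (mul_nonneg hC.le (mul_nonneg h2γ hBγ))) (mul_nonneg hC.le hBγ)
    have htermH : ∀ ℓ ∈ Finset.range (m+1), F m ℓ ≤ H := by
      intro ℓ hℓ
      have hlm : (ℓ:ℝ) ≤ (m:ℝ) := by exact_mod_cast Nat.lt_succ_iff.1 (Finset.mem_range.1 hℓ)
      have hl0 : (0:ℝ) ≤ (ℓ:ℝ) := ℓ.cast_nonneg
      have hm0 : (0:ℝ) ≤ (m:ℝ) := m.cast_nonneg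
      rw [hH]
      apply mul3_mono (Real.rpow_nonneg (hbase m ℓ).le _)
        (hRpos ((m:ℝ)+ℓ) (hmℓ m ℓ)).le (hRpos ((ℓ:ℝ)) ℓ.cast_nonneg).le
      · apply Real.rpow_le_rpow_of_nonpos hB0 _ h2s.le
        rw [hB]; linarith
      · refine le_trans (hRhi ((m:ℝ)+ℓ) (hmℓ m ℓ)) ?_
        apply mul_le_mul_of_nonneg_left _ hC.le
        rw [← Real.mul_rpow (by norm_num) hB0.le]
        apply Real.rpow_le_rpow (by linarith) _ hγ.le
        rw [hB]; linarith
      · refine le_trans (hRhi ((ℓ:ℝ)) ℓ.cast_nonneg) ?_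
        apply mul_le_mul_of_nonneg_left _ hC.le
        apply Real.rpow_le_rpow (by linarith) _ hγ.le
        rw [hB]; linarith
    have hhead : ∑ ℓ ∈ Finset.range (m+1), F m ℓ ≤ B^(1:ℝ) * H := by
      have h1 := Finset.sum_le_card_nsmul (Finset.range (m+1)) (F m) H htermH
      rw [Finset.card_range, nsmul_eq_mul] at h1
      have hBc : ((m+1:ℕ):ℝ) = B^(1:ℝ) := by rw [Real.rpow_one, hB]; push_cast; ring
      rwa [hBc] at h1
    have htermT : ∀ ℓ : ℕ, m ≤ ℓ → F m ℓ ≤ ((2:ℝ)^γ*(C*C) * B^(1+γ-s)) * ((ℓ:ℝ)+1)^(γ-s) := by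
      intro ℓ hml
      have hmr : (m:ℝ) ≤ (ℓ:ℝ) := by exact_mod_cast hml
      have hl1 : (0:ℝ) < (ℓ:ℝ)+1 := by positivity
      have hX0 := hbase m ℓ
      have hm0 : (0:ℝ) ≤ (m:ℝ) := m.cast_nonneg
      have hstep1 : F m ℓ ≤ ((m:ℝ)+2*ℓ+1+γ)^(1-2*s) * (C*((2:ℝ)^γ*((ℓ:ℝ)+1)^γ)) * (C*((ℓ:ℝ)+1)^γ) := by
        apply mul3_mono (Real.rpow_nonneg hX0.le _)
          (hRpos ((m:ℝ)+ℓ) (hmℓ m ℓ)).le (hRpos ((ℓ:ℝ)) ℓ.cast_nonneg).le le_rfl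
        · refine le_trans (hRhi ((m:ℝ)+ℓ) (hmℓ m ℓ)) ?_
          apply mul_le_mul_of_nonneg_left _ hC.le
          rw [← Real.mul_rpow (by norm_num) hl1.le]
          apply Real.rpow_le_rpow (by positivity) _ hγ.le
          linarith
        · exact hRhi ((ℓ:ℝ)) ℓ.cast_nonneg
      have hsplitX : ((m:ℝ)+2*ℓ+1+γ)^(1-2*s) ≤ B^(1+γ-s) * ((ℓ:ℝ)+1)^(-s-γ) := by
        have e : ((m:ℝ)+2*ℓ+1+γ)^(1-2*s)
            = ((m:ℝ)+2*ℓ+1+γ)^(1+γ-s) * ((m:ℝ)+2*ℓ+1+γ)^(-s-γ) := by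
          rw [← Real.rpow_add hX0]; congr 1; ring
        rw [e]
        apply mul_le_mul
        · apply Real.rpow_le_rpow_of_nonpos hB0 _ (by linarith)
          rw [hB]; linarith [ℓ.cast_nonneg (α := ℝ)]
        · apply Real.rpow_le_rpow_of_nonpos hl1 _ (by linarith)
          linarith
        · exact Real.rpow_nonneg hX0.le _
        · exact Real.rpow_nonneg hB0.le _
      calc F m ℓ ≤ ((m:ℝ)+2*ℓ+1+γ)^(1-2*s) * (C*((2:ℝ)^γ*((ℓ:ℝ)+1)^γ)) * (C*((ℓ:ℝ)+1)^γ) := hstep1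
        _ ≤ (B^(1+γ-s) * ((ℓ:ℝ)+1)^(-s-γ)) * (C*((2:ℝ)^γ*((ℓ:ℝ)+1)^γ)) * (C*((ℓ:ℝ)+1)^γ) := by
            apply mul_le_mul_of_nonneg_right (mul_le_mul_of_nonneg_right hsplitX
              (mul_nonneg hC.le (mul_nonneg (Real.rpow_nonneg (by norm_num) _)
                (Real.rpow_nonneg hl1.le _))))
              (mul_nonneg hC.le (Real.rpow_nonneg hl1.le _))
        _ = ((2:ℝ)^γ*(C*C) * B^(1+γ-s)) * ((ℓ:ℝ)+1)^(γ-s) := by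
            have hcol : ((ℓ:ℝ)+1)^(-s-γ) * (((ℓ:ℝ)+1)^γ * ((ℓ:ℝ)+1)^γ) = ((ℓ:ℝ)+1)^(γ-s) := by
              rw [← Real.rpow_add hl1, ← Real.rpow_add hl1]; congr 1; ring
            rw [← hcol]; ring
    have hK0 : 0 ≤ (2:ℝ)^γ*(C*C) * B^(1+γ-s) :=
      mul_nonneg (mul_nonneg h2γ (mul_nonneg hC.le hC.le)) (Real.rpow_nonneg hB0.le _)
    have htails : ∑' j : ℕ, F m (j+(m+1)) ≤ ((2:ℝ)^γ*(C*C) * B^(1+γ-s)) * (C₃ * B^(γ-s+1)) := by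
      have h1 : ∀ j : ℕ, F m (j+(m+1)) ≤ ((2:ℝ)^γ*(C*C) * B^(1+γ-s)) * (((m+1:ℕ):ℝ)+j+1)^(γ-s) := by
        intro j
        have h := htermT (j+(m+1)) (by omega)
        have hcast : ((j+(m+1):ℕ):ℝ)+1 = ((m+1:ℕ):ℝ)+(j:ℝ)+1 := by push_cast; ring
        rwa [hcast] at h
      have h2 := Summable.tsum_le_tsum h1 ((summable_nat_add_iff (m+1)).2 (hsum m))
        (((htail (m+1)).1).mul_left _)
      rw [tsum_mul_left] at h2
      refine le_trans h2 (mul_le_mul_of_nonneg_left ?_ hK0)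
      refine le_trans (htail (m+1)).2 ?_
      apply mul_le_mul_of_nonneg_left _ hC₃.le
      apply Real.rpow_le_rpow_of_nonpos hB0 _ (by linarith)
      rw [hB]; push_cast; linarith
    have hsplit := Summable.sum_add_tsum_nat_add (f := F m) (m+1) (hsum m)
    have hTle : ∑' ℓ, F m ℓ ≤ B^(1:ℝ) * H + ((2:ℝ)^γ*(C*C) * B^(1+γ-s)) * (C₃ * B^(γ-s+1)) := by
      rw [← hsplit]; exact add_le_add hhead htails
    have hPU : (1+(m:ℝ)^2)^(s-γ-1) ≤ B^(2*s-2*γ-2) := by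
      have h1 : 1+(m:ℝ)^2 ≤ B^(2:ℕ) := by rw [hB]; nlinarith [m.cast_nonneg (α := ℝ)]
      have h2 := Real.rpow_le_rpow (by positivity) h1 (show (0:ℝ) ≤ s-γ-1 by linarith)
      calc (1+(m:ℝ)^2)^(s-γ-1) ≤ (B^(2:ℕ))^(s-γ-1) := h2
        _ = B^(2*s-2*γ-2) := by
            rw [← Real.rpow_natCast B 2, ← Real.rpow_mul hB0.le]
            congr 1; push_cast; ring
    have hpow1 : B^(2*s-2*γ-2) * (B^(1:ℝ) * (B^(1-2*s) * (B^γ * B^γ))) = 1 := by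
      rw [← Real.rpow_add hB0, ← Real.rpow_add hB0, ← Real.rpow_add hB0, ← Real.rpow_add hB0]
      rw [show 2*s-2*γ-2 + (1 + (1-2*s + (γ + γ))) = 0 by ring, Real.rpow_zero]
    have hpow2 : B^(2*s-2*γ-2) * (B^(1+γ-s) * B^(γ-s+1)) = 1 := by
      rw [← Real.rpow_add hB0, ← Real.rpow_add hB0]
      rw [show 2*s-2*γ-2 + (1+γ-s + (γ-s+1)) = 0 by ring, Real.rpow_zero]
    have hT0 : 0 ≤ ∑' ℓ, F m ℓ := tsum_nonneg (hFnn m)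
    calc (1+(m:ℝ)^2)^(s-γ-1) * ∑' ℓ, F m ℓ
        ≤ B^(2*s-2*γ-2) * (B^(1:ℝ) * H + ((2:ℝ)^γ*(C*C) * B^(1+γ-s)) * (C₃ * B^(γ-s+1))) :=
          mul_le_mul hPU hTle hT0 (Real.rpow_nonneg hB0.le _)
      _ = (2:ℝ)^γ*(C*C) + (2:ℝ)^γ*(C*C)*C₃ := by
          rw [hH]
          linear_combination ((2:ℝ)^γ*(C*C)) * hpow1 + ((2:ℝ)^γ*(C*C)*C₃) * hpow2
  exact ⟨(2:ℝ)^(γ+1-s) * ((5+γ)^(1-2*s) * (c*c)),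
    (2:ℝ)^γ*(C*C) + (2:ℝ)^γ*(C*C)*C₃,
    mul_pos (Real.rpow_pos_of_pos two_pos _)
      (mul_pos (Real.rpow_pos_of_pos (by linarith) _) (mul_pos hc hc)),
    le_trans (hL 0) (hU 0), fun m => ⟨hL m, hU m⟩⟩
end

section
/- Let γ ∈ (0,1) and define φ_γ(x) = (-γ) ∑_{k=0}^∞ x^{k-γ}/(k-γ) for x ∈ (0,1). Then φ_γ satisfies (x^{γ+1} ρ φ_γ')' = 0 in the radial variable (equivalently L_γ φ_γ = (γ+1)² φ_γ), and the limits lim_{x→0⁺} x^γ φ_γ(x) = 1 and lim_{ρ→1⁻} x^{γ+1} ∂_ρ φ_γ = 2γ hold, where x = 1-ρ². -/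
open Real Filter Set

/-- `φ_γ(x) = (-γ) ∑_{k≥0} x^{k-γ}/(k-γ)` for `γ ∈ (0,1)`, `x ∈ (0,1)`. -/
noncomputable def phiGamma (γ : ℝ) (x : ℝ) : ℝ :=
  (-γ) * ∑' k : ℕ, x ^ ((k : ℝ) - γ) / ((k : ℝ) - γ)

lemma summable_pow_div (γ x : ℝ) (hγ : γ ∈ Set.Ioo (0 : ℝ) 1) (hx : x ∈ Set.Ioo (0 : ℝ) 1) :
    Summable (fun k : ℕ => x ^ k / ((k : ℝ) - γ)) := by
  obtain ⟨hγ0, hγ1⟩ := hγ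
  obtain ⟨hx0, hx1⟩ := hx
  apply Summable.of_norm_bounded_eventually (g := fun k : ℕ => (1 / (1 - γ)) * x ^ k)
    (((summable_geometric_of_lt_one hx0.le hx1)).mul_left _)
  rw [Nat.cofinite_eq_atTop]
  filter_upwards [eventually_ge_atTop 1] with k hk
  have hk1 : (1 : ℝ) ≤ (k : ℝ) := by exact_mod_cast hk
  have hden : (0 : ℝ) < 1 - γ := by linarith
  have hden2 : (0 : ℝ) < (k : ℝ) - γ := by linarith
  have hle : 1 - γ ≤ (k : ℝ) - γ := by linarith
  rw [Real.norm_eq_abs, abs_of_nonneg (by positivity)]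
  rw [one_div, inv_mul_eq_div]
  gcongr

lemma summable_rpow_div (γ x : ℝ) (hγ : γ ∈ Set.Ioo (0 : ℝ) 1) (hx : x ∈ Set.Ioo (0 : ℝ) 1) :
    Summable (fun k : ℕ => x ^ ((k : ℝ) - γ) / ((k : ℝ) - γ)) := by
  have h : (fun k : ℕ => x ^ ((k : ℝ) - γ) / ((k : ℝ) - γ))
      = fun k : ℕ => x ^ (-γ) * (x ^ k / ((k : ℝ) - γ)) := by
    funext k
    rw [show (k : ℝ) - γ = -γ + k by ring, Real.rpow_add hx.1, Real.rpow_natCast]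
    ring
  rw [h]
  exact (summable_pow_div γ x hγ hx).mul_left _

lemma phi_hasDerivAt (γ : ℝ) (hγ : γ ∈ Set.Ioo (0 : ℝ) 1) {x : ℝ} (hx : x ∈ Set.Ioo (0 : ℝ) 1) :
    HasDerivAt (phiGamma γ) (-γ * (x ^ (-(γ + 1)) * (1 - x)⁻¹)) x := by
  obtain ⟨hγ0, hγ1⟩ := hγ
  obtain ⟨hx0, hx1⟩ := hx
  set a : ℝ := x / 2 with ha
  set b : ℝ := (x + 1) / 2 with hb
  have ha0 : 0 < a := by positivity
  have hab : a < b := by simp only [ha, hb]; linarith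
  have hb1 : b < 1 := by simp only [hb]; linarith
  have hb0 : 0 < b := lt_trans ha0 hab
  have hxs : x ∈ Set.Ioo a b := ⟨by simp [ha]; linarith, by simp [hb]; linarith⟩
  have hg : ∀ (k : ℕ), ∀ y ∈ Set.Ioo a b,
      HasDerivAt (fun z : ℝ => z ^ ((k : ℝ) - γ) / ((k : ℝ) - γ)) (y ^ ((k : ℝ) - γ - 1)) y := by
    intro k y hy
    have hy0 : (0 : ℝ) < y := lt_trans ha0 hy.1
    have hc : (k : ℝ) - γ ≠ 0 := by
      rcases Nat.eq_zero_or_pos k with h | h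
      · simp [h]; linarith
      · have : (1 : ℝ) ≤ (k : ℝ) := by exact_mod_cast h
        intro hcon; nlinarith
    have := (Real.hasDerivAt_rpow_const (p := (k : ℝ) - γ) (Or.inl hy0.ne')).div_const
      ((k : ℝ) - γ)
    simpa [mul_div_assoc, mul_div_cancel_left₀ _ hc] using this
  have hg' : ∀ (k : ℕ), ∀ y ∈ Set.Ioo a b,
      ‖y ^ ((k : ℝ) - γ - 1)‖ ≤ a ^ (-(γ + 1)) * b ^ k := by
    intro k y hy
    have hy0 : (0 : ℝ) < y := lt_trans ha0 hy.1
    have h1 : y ^ ((k : ℝ) - γ - 1) = y ^ (-(γ + 1)) * y ^ k := by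
      rw [show (k : ℝ) - γ - 1 = -(γ + 1) + k by ring, Real.rpow_add hy0, Real.rpow_natCast]
    rw [Real.norm_eq_abs, abs_of_nonneg (Real.rpow_nonneg hy0.le _), h1]
    have h2 : y ^ (-(γ + 1)) ≤ a ^ (-(γ + 1)) := by
      rw [Real.rpow_neg hy0.le, Real.rpow_neg ha0.le]
      apply inv_anti₀ (Real.rpow_pos_of_pos ha0 _)
      exact Real.rpow_le_rpow ha0.le hy.1.le (by linarith)
    have h3 : y ^ k ≤ b ^ k := pow_le_pow_left₀ hy0.le hy.2.le k
    exact mul_le_mul h2 h3 (pow_nonneg hy0.le k) (Real.rpow_nonneg ha0.le _)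
  have key : HasDerivAt (fun z => ∑' k : ℕ, z ^ ((k : ℝ) - γ) / ((k : ℝ) - γ))
      (∑' k : ℕ, x ^ ((k : ℝ) - γ - 1)) x :=
    hasDerivAt_tsum_of_isPreconnected
      (((summable_geometric_of_lt_one hb0.le hb1)).mul_left (a ^ (-(γ + 1))))
      isOpen_Ioo isPreconnected_Ioo hg hg' hxs
      (summable_rpow_div γ x ⟨hγ0, hγ1⟩ ⟨hx0, hx1⟩) hxs
  have hsum : (∑' k : ℕ, x ^ ((k : ℝ) - γ - 1)) = x ^ (-(γ + 1)) * (1 - x)⁻¹ := by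
    have h1 : (fun k : ℕ => x ^ ((k : ℝ) - γ - 1)) = fun k : ℕ => x ^ (-(γ + 1)) * x ^ k := by
      funext k
      rw [show (k : ℝ) - γ - 1 = -(γ + 1) + k by ring, Real.rpow_add hx0, Real.rpow_natCast]
    rw [h1, tsum_mul_left, tsum_geometric_of_lt_one hx0.le hx1]
  rw [hsum] at key
  exact key.const_mul (-γ)

lemma radial_hasDerivAt (γ : ℝ) (hγ : γ ∈ Set.Ioo (0 : ℝ) 1) {r : ℝ}
    (hr : r ∈ Set.Ioo (0 : ℝ) 1) :
    HasDerivAt (fun r' : ℝ => phiGamma γ (1 - r' ^ 2))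
      (2 * γ * ((1 - r ^ 2) ^ (-(γ + 1)) / r)) r := by
  obtain ⟨hr0, hr1⟩ := hr
  have hx : (1 - r ^ 2) ∈ Set.Ioo (0 : ℝ) 1 := by
    constructor <;> nlinarith
  have hinner : HasDerivAt (fun r' : ℝ => 1 - r' ^ 2) (-(2 * r)) r := by
    have := (hasDerivAt_pow 2 r).const_sub 1
    simpa using this
  have key := (phi_hasDerivAt γ hγ hx).comp r hinner
  simp only [Function.comp_def] at key
  refine key.congr_deriv ?_
  rw [show (1 : ℝ) - (1 - r ^ 2) = r ^ 2 by ring]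
  field_simp

/-- for `γ ∈ (0,1)`, `φ_γ` is a radial solution of
`(x^{γ+1} ρ φ_γ')' = 0` (in the radial variable `ρ`, with `x = 1-ρ²`), and satisfies
`lim_{x→0⁺} x^γ φ_γ(x) = 1` and `lim_{ρ→1⁻} x^{γ+1} ∂_ρ φ_γ = 2γ`. -/
theorem phiGamma_properties (γ : ℝ) (hγ : γ ∈ Set.Ioo (0 : ℝ) 1) :
    (∀ ρ ∈ Set.Ioo (0 : ℝ) 1,
      deriv (fun r : ℝ => (1 - r ^ 2) ^ (γ + 1) * r *
        deriv (fun r' : ℝ => phiGamma γ (1 - r' ^ 2)) r) ρ = 0) ∧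
    Tendsto (fun x : ℝ => x ^ γ * phiGamma γ x) (nhdsWithin 0 (Set.Ioi 0)) (nhds 1) ∧
    Tendsto (fun ρ : ℝ => (1 - ρ ^ 2) ^ (γ + 1) *
        deriv (fun r : ℝ => phiGamma γ (1 - r ^ 2)) ρ)
      (nhdsWithin 1 (Set.Iio 1)) (nhds (2 * γ)) := by
  obtain ⟨hγ0, hγ1⟩ := hγ
  -- value of the radial derivative on (0,1)
  have hderiv : ∀ r ∈ Set.Ioo (0 : ℝ) 1,
      deriv (fun r' : ℝ => phiGamma γ (1 - r' ^ 2)) r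
        = 2 * γ * ((1 - r ^ 2) ^ (-(γ + 1)) / r) := fun r hr =>
    (radial_hasDerivAt γ ⟨hγ0, hγ1⟩ hr).deriv
  have hval : ∀ r ∈ Set.Ioo (0 : ℝ) 1,
      (1 - r ^ 2) ^ (γ + 1) *
        deriv (fun r' : ℝ => phiGamma γ (1 - r' ^ 2)) r = 2 * γ / r := by
    intro r hr
    have hx0 : (0 : ℝ) < 1 - r ^ 2 := by nlinarith [hr.1, hr.2]
    rw [hderiv r hr, Real.rpow_neg hx0.le]
    have hne : (1 - r ^ 2 : ℝ) ^ (γ + 1) ≠ 0 := (Real.rpow_pos_of_pos hx0 _).ne'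
    generalize (1 - r ^ 2 : ℝ) ^ (γ + 1) = A at hne ⊢
    have hAA : A * A⁻¹ = 1 := mul_inv_cancel₀ hne
    field_simp
  refine ⟨?_, ?_, ?_⟩
  · -- part 1
    intro ρ hρ
    have hev : (fun r : ℝ => (1 - r ^ 2) ^ (γ + 1) * r *
        deriv (fun r' : ℝ => phiGamma γ (1 - r' ^ 2)) r) =ᶠ[nhds ρ] fun _ => 2 * γ := by
      filter_upwards [isOpen_Ioo.mem_nhds hρ] with r hr
      have hr0 := hr.1
      rw [mul_assoc, show (1 - r ^ 2) ^ (γ + 1) * (r *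
          deriv (fun r' : ℝ => phiGamma γ (1 - r' ^ 2)) r)
          = r * ((1 - r ^ 2) ^ (γ + 1) * deriv (fun r' : ℝ => phiGamma γ (1 - r' ^ 2)) r)
          by ring, hval r hr]
      field_simp
    rw [hev.deriv_eq, deriv_const]
  · -- part 2
    have hx_eq : ∀ x ∈ Set.Ioo (0 : ℝ) 1,
        x ^ γ * phiGamma γ x = 1 - γ * ∑' k : ℕ, x ^ (k + 1) / ((k : ℝ) + 1 - γ) := by
      intro x hx
      obtain ⟨hx0, hx1⟩ := hx
      have hsum := summable_pow_div γ x ⟨hγ0, hγ1⟩ ⟨hx0, hx1⟩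
      have h1 : x ^ γ * phiGamma γ x = (-γ) * ∑' k : ℕ, x ^ k / ((k : ℝ) - γ) := by
        rw [phiGamma, ← mul_assoc, mul_comm (x ^ γ) (-γ), mul_assoc, ← tsum_mul_left]
        congr 1
        apply tsum_congr
        intro k
        rw [← mul_div_assoc]
        congr 1
        rw [← Real.rpow_natCast x k, ← Real.rpow_add hx0,
          show γ + ((k : ℝ) - γ) = (k : ℝ) by ring]
      rw [h1, Summable.tsum_eq_zero_add hsum]
      have h0 : x ^ (0 : ℕ) / ((0 : ℕ) - γ : ℝ) = -γ⁻¹ := by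
        simp [div_eq_mul_inv, inv_neg]
      rw [h0]
      have : (fun k : ℕ => x ^ (k + 1) / (((k : ℕ) + 1 : ℕ) - γ : ℝ))
          = fun k : ℕ => x ^ (k + 1) / ((k : ℝ) + 1 - γ) := by
        funext k; push_cast; ring_nf
      rw [this, mul_add, neg_mul_neg, mul_inv_cancel₀ hγ0.ne']
      ring
    have htail : Tendsto (fun x : ℝ => ∑' k : ℕ, x ^ (k + 1) / ((k : ℝ) + 1 - γ))
        (nhdsWithin 0 (Set.Ioi 0)) (nhds 0) := by
      have hbound : Tendsto (fun x : ℝ => x / (1 - γ) * (1 - x)⁻¹)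
          (nhdsWithin 0 (Set.Ioi 0)) (nhds 0) := by
        have : Tendsto (fun x : ℝ => x / (1 - γ) * (1 - x)⁻¹) (nhds 0)
            (nhds ((0 : ℝ) / (1 - γ) * (1 - 0)⁻¹)) := by
          apply Tendsto.mul
          · exact (continuous_id.div_const _).tendsto 0
          · exact (tendsto_id.const_sub 1).inv₀ (by norm_num)
        simpa using this.mono_left nhdsWithin_le_nhds
      apply squeeze_zero' ?_ ?_ hbound
      · filter_upwards [self_mem_nhdsWithin,
          eventually_nhdsWithin_of_eventually_nhds (eventually_lt_nhds one_pos)] with x hx0 hx1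
        have hx0' : (0:ℝ) < x := hx0
        apply tsum_nonneg
        intro k
        have hk : (0:ℝ) < (k : ℝ) + 1 - γ := by
          have : (0:ℝ) ≤ (k : ℝ) := Nat.cast_nonneg k
          linarith
        positivity
      · filter_upwards [self_mem_nhdsWithin,
          eventually_nhdsWithin_of_eventually_nhds (eventually_lt_nhds one_pos)] with x hx0 hx1
        have hx0' : (0:ℝ) < x := hx0
        have hsum2 : Summable (fun k : ℕ => x / (1 - γ) * x ^ k) :=
          (summable_geometric_of_lt_one hx0'.le hx1).mul_left _
        have hterm0 : ∀ k : ℕ, (0:ℝ) ≤ x ^ (k + 1) / ((k : ℝ) + 1 - γ) := by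
          intro k
          have hkc : (0:ℝ) ≤ (k : ℝ) := Nat.cast_nonneg k
          have hk : (0:ℝ) < (k : ℝ) + 1 - γ := by linarith
          positivity
        have hterm : ∀ k : ℕ, x ^ (k + 1) / ((k : ℝ) + 1 - γ) ≤ x / (1 - γ) * x ^ k := by
          intro k
          have hkc : (0:ℝ) ≤ (k : ℝ) := Nat.cast_nonneg k
          have hk : (0:ℝ) < (k : ℝ) + 1 - γ := by linarith
          have hr : x / (1 - γ) * x ^ k = x ^ (k + 1) / (1 - γ) := by
            rw [pow_succ]; ring
          rw [hr]
          apply div_le_div_of_nonneg_left (by positivity) (by linarith) (by linarith)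
        have hsum1 : Summable (fun k : ℕ => x ^ (k + 1) / ((k : ℝ) + 1 - γ)) :=
          Summable.of_nonneg_of_le hterm0 hterm hsum2
        calc ∑' k : ℕ, x ^ (k + 1) / ((k : ℝ) + 1 - γ)
            ≤ ∑' k : ℕ, x / (1 - γ) * x ^ k := Summable.tsum_le_tsum hterm hsum1 hsum2
          _ = x / (1 - γ) * (1 - x)⁻¹ := by
              rw [tsum_mul_left, tsum_geometric_of_lt_one hx0'.le hx1]
    have hmain : Tendsto (fun x : ℝ => 1 - γ * ∑' k : ℕ, x ^ (k + 1) / ((k : ℝ) + 1 - γ))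
        (nhdsWithin 0 (Set.Ioi 0)) (nhds 1) := by
      have := (htail.const_mul γ).const_sub 1
      simpa using this
    apply hmain.congr'
    filter_upwards [self_mem_nhdsWithin,
      eventually_nhdsWithin_of_eventually_nhds (eventually_lt_nhds one_pos)] with x hx0 hx1
    exact (hx_eq x ⟨hx0, hx1⟩).symm
  · -- part 3
    have hlim : Tendsto (fun ρ : ℝ => 2 * γ / ρ) (nhdsWithin 1 (Set.Iio 1)) (nhds (2 * γ)) := by
      have : Tendsto (fun ρ : ℝ => 2 * γ / ρ) (nhds 1) (nhds (2 * γ / 1)) :=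
        (tendsto_const_nhds.div tendsto_id one_ne_zero)
      simpa using this.mono_left nhdsWithin_le_nhds
    apply hlim.congr'
    filter_upwards [self_mem_nhdsWithin,
      eventually_nhdsWithin_of_eventually_nhds (eventually_gt_nhds (by norm_num : (0:ℝ) < 1))]
      with ρ hρ1 hρ0
    exact (hval ρ ⟨hρ0, hρ1⟩).symm
end

section
/- Fix h ∈ C_c^∞([0,a)) with h(0) = 1 and for integers n with |n| ≥ 2 set f_n(x) = h(n²x)(1 + 2 log|n| / log x) on (0,a]. Then the quantity (1/log|n|)·( ∫₀^a x (log x)² f_n'(x)² dx + n² ∫₀^a (log x)² f_n(x)² dx ) is bounded uniformly in n; more precisely ∫₀^a (n² f_n(x)² + x f_n'(x)²)(log x)² dx = 2 log|n| + O(1) as |n| → ∞. -/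
open Real intervalIntegral Set MeasureTheory Filter

private lemma aux_int_logsq {a : ℝ} (ha0 : 0 < a) (ha : a ≤ 1) :
    IntegrableOn (fun x => (Real.log x)^2) (Ioc 0 a) := by
  have hg : IntegrableOn (fun x : ℝ => 16 * x ^ (-(1:ℝ)/2)) (Ioc 0 a) := by
    have := (intervalIntegrable_rpow' (r := -(1:ℝ)/2) (by norm_num)).const_mul 16 (a := 0) (b := a)
    rwa [intervalIntegrable_iff_integrableOn_Ioc_of_le ha0.le] at this
  refine Integrable.mono' hg ((Real.measurable_log.pow_const 2).aestronglyMeasurable) ?_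
  rw [MeasureTheory.ae_restrict_iff' measurableSet_Ioc]
  filter_upwards with x hx
  have hx0 : 0 < x := hx.1
  have hlog : Real.log x ≤ 0 := Real.log_nonpos hx0.le (hx.2.trans ha)
  have h1 : -Real.log x ≤ 4 * x ^ (-(1:ℝ)/4) := by
    have := Real.log_le_rpow_div (x := x⁻¹) (by positivity) (ε := (1:ℝ)/4) (by norm_num)
    rw [Real.log_inv] at this
    calc -Real.log x ≤ (x⁻¹) ^ ((1:ℝ)/4) / ((1:ℝ)/4) := this
      _ = 4 * x ^ (-(1:ℝ)/4) := by
          rw [← Real.rpow_neg_one x, ← Real.rpow_mul hx0.le]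
          norm_num
          rw [div_div_eq_mul_div, mul_comm]
          norm_num
  have h2 : (0:ℝ) ≤ 4 * x ^ (-(1:ℝ)/4) := by positivity
  have : (Real.log x)^2 = (-Real.log x)^2 := by ring
  rw [Real.norm_eq_abs, abs_of_nonneg (by positivity), this]
  calc (-Real.log x)^2 ≤ (4 * x ^ (-(1:ℝ)/4))^2 := by
        apply pow_le_pow_left₀ (by linarith) h1
    _ = 16 * x ^ (-(1:ℝ)/2) := by
        rw [mul_pow, ← Real.rpow_natCast (x ^ (-(1:ℝ)/4)) 2, ← Real.rpow_mul hx0.le]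
        norm_num

private lemma aux_int_invlogsq {a : ℝ} (ha0 : 0 < a) (ha : a < 1) :
    IntegrableOn (fun x => 1 / (x * (Real.log x)^2)) (Ioc 0 a) := by
  have key := integrableOn_deriv_of_nonneg (a := 0) (b := a)
    (g := fun x => -(Real.log x)⁻¹) (g' := fun x => 1 / (x * (Real.log x)^2)) ?_ ?_ ?_
  · exact key
  · intro x hx
    rcases eq_or_lt_of_le hx.1 with h0 | h0
    · subst h0
      have h1 : Tendsto (fun x => -(Real.log x)⁻¹) (nhdsWithin 0 (Ioc 0 a)) (nhds 0) := by
        have hlog : Tendsto Real.log (nhdsWithin 0 (Ioc 0 a)) atBot :=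
          Real.tendsto_log_nhdsGT_zero.mono_left
            (nhdsWithin_mono _ (fun y hy => hy.1))
        have h2 : Tendsto (fun x => -Real.log x) (nhdsWithin 0 (Ioc 0 a)) atTop :=
          Filter.tendsto_neg_atBot_atTop.comp hlog
        have h3 := h2.inv_tendsto_atTop
        have : (fun x => -(Real.log x)⁻¹) = (fun x : ℝ => -Real.log x)⁻¹ := by
          funext y; simp [inv_neg]
        rw [this]
        simpa using h3
      rw [← Set.Ioc_insert_left ha0.le]
      rw [continuousWithinAt_insert_self]
      unfold ContinuousWithinAt
      simpa using h1
    · exact ((Real.continuousAt_log h0.ne').inv₀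
        (Real.log_ne_zero_of_pos_of_ne_one h0
          (ne_of_lt (lt_of_le_of_lt hx.2 ha)))).neg.continuousWithinAt
  · intro x hx
    have hx0 : 0 < x := hx.1
    have hlogne : Real.log x ≠ 0 :=
      Real.log_ne_zero_of_pos_of_ne_one hx0 (ne_of_lt (hx.2.trans ha))
    have hd := ((Real.hasDerivAt_log hx0.ne').inv hlogne).neg
    refine hd.congr_deriv ?_
    field_simp
  · intro x hx
    have hx0 : 0 < x := hx.1
    positivity

private lemma aux_int_of_bound {a : ℝ} (ha0 : 0 < a) (ha : a < 1) (f : ℝ → ℝ)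
    (hf : ContinuousOn f (Ioc 0 a)) (c1 c2 c3 : ℝ)
    (hbd : ∀ x ∈ Ioc 0 a, |f x| ≤ c1 + c2 * (Real.log x)^2 + c3 * (1/(x * (Real.log x)^2))) :
    IntegrableOn f (Ioc 0 a) := by
  have hg : IntegrableOn
      (fun x => c1 + c2 * (Real.log x)^2 + c3 * (1/(x*(Real.log x)^2))) (Ioc 0 a) := by
    refine Integrable.add (Integrable.add ?_ ?_) ?_
    · exact integrableOn_const measure_Ioc_lt_top.ne
    · exact (aux_int_logsq ha0 ha.le).const_mul c2
    · exact (aux_int_invlogsq ha0 ha).const_mul c3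
  refine Integrable.mono' hg (hf.aestronglyMeasurable measurableSet_Ioc) ?_
  rw [ae_restrict_iff' measurableSet_Ioc]
  filter_upwards with x hx
  simpa [Real.norm_eq_abs] using hbd x hx

set_option maxHeartbeats 1000000 in
/-- key estimate for the log-regularized right inverse, case `γ = 0`:
with `a ∈ (0,1)`, `h ∈ C_c^∞([0,a))`, `h(0)=1`, and
`f_n(x) = h(n²x)(1 + 2 log|n|/log x)`,
`f_n'(x) = n² h'(n²x) log(n²x)/log x - 2 log|n| · h(n²x)/(x (log x)²)`,
one has `∫₀^a (n² f_n² + x f_n'²)(log x)² dx = 2 log|n| + O(1)` as `|n| → ∞`;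
in particular `(1/log|n|)(∫₀^a x(log x)² f_n'² dx + n² ∫₀^a (log x)² f_n² dx)` is
uniformly bounded in `n`. -/

theorem log_right_inverse_estimate (a : ℝ) (ha : a ∈ Set.Ioo (0 : ℝ) 1)
    (h : ℝ → ℝ) (hh : ContDiff ℝ (⊤ : ℕ∞) h) (hh0 : h 0 = 1)
    (hsupp : ∃ b < a, ∀ u ≥ b, h u = 0) :
    ∃ C : ℝ, ∀ n : ℤ, 2 ≤ |n| →
      abs ((∫ x in (0 : ℝ)..a,
          ((n : ℝ) ^ 2 * (h ((n : ℝ) ^ 2 * x) * (1 + 2 * Real.log |(n : ℝ)| / Real.log x)) ^ 2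
            + x * ((n : ℝ) ^ 2 * deriv h ((n : ℝ) ^ 2 * x)
                  * Real.log ((n : ℝ) ^ 2 * x) / Real.log x
                - 2 * Real.log |(n : ℝ)| * h ((n : ℝ) ^ 2 * x)
                  / (x * (Real.log x) ^ 2)) ^ 2)
            * (Real.log x) ^ 2)
        - 2 * Real.log |(n : ℝ)|) ≤ C := by
  obtain ⟨b, hba, hb⟩ := hsupp
  obtain ⟨ha0, ha1⟩ := ha
  have hb0 : 0 < b := by
    by_contra hc
    push_neg at hc
    have := hb 0 hc
    rw [hh0] at this; norm_num at this
  have hb1 : b < 1 := hba.trans ha1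
  have hhc : Continuous h := hh.continuous
  have hh' : Continuous (deriv h) := hh.continuous_deriv (by simp)
  have hdiff : Differentiable ℝ h := hh.differentiable (by simp)
  have hderivb : ∀ u : ℝ, b < u → deriv h u = 0 := by
    intro u hu
    have hev : h =ᶠ[nhds u] fun _ => 0 :=
      Filter.eventually_of_mem (Ioi_mem_nhds hu) (fun y hy => hb y (le_of_lt hy))
    rw [hev.deriv_eq]; exact deriv_const u 0
  set q : ℝ → ℝ := fun u => ((h u) ^ 2 + u * (deriv h u) ^ 2) * (Real.log u) ^ 2 with hq
  have hqcont : ∀ u : ℝ, u ≠ 0 → ContinuousAt q u := fun u hu =>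
    ((hhc.continuousAt.pow 2).add (continuousAt_id.mul (hh'.continuousAt.pow 2))).mul
      ((Real.continuousAt_log hu).pow 2)
  have hla : Real.log a < 0 := Real.log_neg ha0 ha1
  refine ⟨|∫ u in (0:ℝ)..b, q u|, ?_⟩
  intro n hn
  set N : ℝ := (n : ℝ) ^ 2 with hNdef
  set L : ℝ := Real.log |(n : ℝ)| with hLdef
  have hn2 : (2:ℝ) ≤ |(n:ℝ)| := by
    rw [← Int.cast_abs]; exact_mod_cast hn
  have hL0 : 0 < L := Real.log_pos (by linarith)
  have hN4 : (4:ℝ) ≤ N := by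
    rw [hNdef, ← sq_abs]; nlinarith
  have hN0 : (0:ℝ) < N := by linarith
  have hlogN : Real.log N = 2 * L := by
    rw [hNdef, Real.log_pow, hLdef, Real.log_abs]; push_cast; ring
  have hbNa : b < N * a := by nlinarith
  have hNa0 : 0 < N * a := mul_pos hN0 ha0
  -- bounds for h and deriv h on [0, N*a]
  obtain ⟨M0, hM0⟩ :=
    (isCompact_Icc (a := (0:ℝ)) (b := N*a)).exists_bound_of_continuousOn hhc.continuousOn
  obtain ⟨M1, hM1⟩ :=
    (isCompact_Icc (a := (0:ℝ)) (b := N*a)).exists_bound_of_continuousOn hh'.continuousOn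
  have hM0nn : 0 ≤ M0 := le_trans (norm_nonneg _) (hM0 0 ⟨le_refl _, hNa0.le⟩)
  have hM1nn : 0 ≤ M1 := le_trans (norm_nonneg _) (hM1 0 ⟨le_refl _, hNa0.le⟩)
  set K : ℝ := 1 + 2*L/(-Real.log a) with hK
  have hK0 : 0 ≤ K := by
    have h1 : (0:ℝ) < -Real.log a := by linarith
    have h2 : 0 ≤ 2*L/(-Real.log a) := div_nonneg (by linarith) h1.le
    rw [hK]; linarith
  -- per-point facts
  have hfacts : ∀ x ∈ Ioc (0:ℝ) a, 0 < x ∧ Real.log x < 0 ∧ 0 < N*x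
      ∧ Real.log (N*x) = 2*L + Real.log x ∧ |h (N*x)| ≤ M0 ∧ |deriv h (N*x)| ≤ M1
      ∧ N*x ≤ N*a := by
    intro x hx
    have hx0 := hx.1
    have hxa := hx.2
    have hlx : Real.log x < 0 := Real.log_neg hx0 (lt_of_le_of_lt hxa ha1)
    have hNx0 : 0 < N*x := mul_pos hN0 hx0
    have hNxa : N*x ≤ N*a := mul_le_mul_of_nonneg_left hxa hN0.le
    have hmem : N*x ∈ Icc (0:ℝ) (N*a) := ⟨hNx0.le, hNxa⟩
    have hlNx : Real.log (N*x) = 2*L + Real.log x := by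
      rw [Real.log_mul hN0.ne' hx0.ne', hlogN]
    exact ⟨hx0, hlx, hNx0, hlNx,
      by simpa [Real.norm_eq_abs] using hM0 _ hmem,
      by simpa [Real.norm_eq_abs] using hM1 _ hmem, hNxa⟩
  set F : ℝ → ℝ := fun y => -(2*L) * ((h (N*y))^2 * (Real.log (N*y) / Real.log y)) with hFdef
  set Fd : ℝ → ℝ := fun x =>
    -(2*L) * (2 * N * deriv h (N*x) * h (N*x) * (Real.log (N*x) / Real.log x))
      + 4*L^2 * ((h (N*x))^2 / (x * (Real.log x)^2)) with hFddef
  set Q : ℝ → ℝ := fun x => N * q (N*x) with hQdef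
  -- pointwise identity
  have hPQ : ∀ x ∈ Ioc (0:ℝ) a,
      (N * (h (N * x) * (1 + 2 * L / Real.log x)) ^ 2
        + x * (N * deriv h (N * x) * Real.log (N * x) / Real.log x
            - 2 * L * h (N * x) / (x * (Real.log x) ^ 2)) ^ 2) * (Real.log x) ^ 2
      = Q x + Fd x := by
    intro x hx
    obtain ⟨hx0, hlx, hNx0, hlNx, -, -, -⟩ := hfacts x hx
    have hlxne : Real.log x ≠ 0 := ne_of_lt hlx
    simp only [hQdef, hFddef, hq]
    rw [hlNx]
    field_simp
    ring
  -- integrability of Q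
  have hQcont : ContinuousOn Q (Ioc 0 a) := by
    intro x hx
    obtain ⟨hx0, hlx, hNx0, -, -, -, -⟩ := hfacts x hx
    exact (continuousAt_const.mul ((hqcont _ hNx0.ne').comp
      ((continuous_const.mul continuous_id).continuousAt))).continuousWithinAt
  have hQbd : ∀ x ∈ Ioc (0:ℝ) a, |Q x| ≤
      (8*(N*(M0^2 + (N*a)*M1^2))*L^2) + (2*(N*(M0^2+(N*a)*M1^2))) * (Real.log x)^2
        + 0 * (1/(x*(Real.log x)^2)) := by
    intro x hx
    obtain ⟨hx0, hlx, hNx0, hlNx, hb0', hb1', hNxa⟩ := hfacts x hx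
    have e1 : (h (N*x))^2 ≤ M0^2 := by
      calc (h (N*x))^2 = |h (N*x)|^2 := (sq_abs _).symm
        _ ≤ M0^2 := pow_le_pow_left₀ (abs_nonneg _) hb0' 2
    have e2 : (deriv h (N*x))^2 ≤ M1^2 := by
      calc (deriv h (N*x))^2 = |deriv h (N*x)|^2 := (sq_abs _).symm
        _ ≤ M1^2 := pow_le_pow_left₀ (abs_nonneg _) hb1' 2
    have hQx : Q x = N * (((h (N*x))^2 + (N*x)*(deriv h (N*x))^2) * (Real.log (N*x))^2) := by
      simp only [hQdef, hq]
    have hQnn : 0 ≤ Q x := by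
      rw [hQx]
      exact mul_nonneg hN0.le (mul_nonneg (add_nonneg (sq_nonneg _)
        (mul_nonneg hNx0.le (sq_nonneg _))) (sq_nonneg _))
    rw [abs_of_nonneg hQnn, hQx, hlNx]
    have h2 : (2*L + Real.log x)^2 ≤ 8*L^2 + 2*(Real.log x)^2 := by
      linarith [sq_nonneg (2*L - Real.log x), sq_nonneg (2*L + Real.log x),
        sq_nonneg (Real.log x)]
    have hinner : (h (N*x))^2 + (N*x)*(deriv h (N*x))^2 ≤ M0^2 + (N*a)*M1^2 :=
      add_le_add e1 (mul_le_mul hNxa e2 (sq_nonneg _) hNa0.le)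
    have h3 : ((h (N*x))^2 + (N*x)*(deriv h (N*x))^2) * (2*L + Real.log x)^2
        ≤ (M0^2 + (N*a)*M1^2) * (8*L^2 + 2*(Real.log x)^2) :=
      mul_le_mul hinner h2 (sq_nonneg _)
        (add_nonneg (sq_nonneg _) (mul_nonneg hNa0.le (sq_nonneg _)))
    have h4 := mul_le_mul_of_nonneg_left h3 hN0.le
    linarith [h4]
  have hQint : IntegrableOn Q (Ioc 0 a) := aux_int_of_bound ha0 ha1 Q hQcont _ _ _ hQbd
  -- integrability of Fd
  have hFdcont : ContinuousOn Fd (Ioc 0 a) := by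
    intro x hx
    obtain ⟨hx0, hlx, hNx0, -, -, -, -⟩ := hfacts x hx
    have hcl : ContinuousAt (fun y : ℝ => N * y) x := (continuous_const.mul continuous_id).continuousAt
    have c1 : ContinuousAt (fun y => h (N*y)) x := hhc.continuousAt.comp hcl
    have c2 : ContinuousAt (fun y => deriv h (N*y)) x := hh'.continuousAt.comp hcl
    have c3 : ContinuousAt (fun y => Real.log (N*y)) x := (Real.continuousAt_log hNx0.ne').comp hcl
    have c4 : ContinuousAt Real.log x := Real.continuousAt_log hx0.ne'
    have hden : x * (Real.log x)^2 ≠ 0 :=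
      mul_ne_zero hx0.ne' (pow_ne_zero 2 (ne_of_lt hlx))
    exact ((continuousAt_const.mul
        ((((continuousAt_const.mul c2)).mul c1).mul (c3.div c4 (ne_of_lt hlx)))).add
      (continuousAt_const.mul ((c1.pow 2).div (continuousAt_id.mul (c4.pow 2)) hden))).continuousWithinAt
  have hFdbd : ∀ x ∈ Ioc (0:ℝ) a, |Fd x| ≤
      (4*L*N*M1*M0*K) + 0*(Real.log x)^2 + (4*L^2*M0^2)*(1/(x*(Real.log x)^2)) := by
    intro x hx
    obtain ⟨hx0, hlx, hNx0, hlNx, hb0', hb1', hNxa⟩ := hfacts x hx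
    have hlax : Real.log x ≤ Real.log a := Real.log_le_log hx0 hx.2
    have hratio : |Real.log (N*x)/Real.log x| ≤ K := by
      rw [hlNx]
      have hlxne : Real.log x ≠ 0 := ne_of_lt hlx
      have e : (2*L + Real.log x)/Real.log x = 1 + 2*L/Real.log x := by
        rw [add_div, div_self hlxne, add_comm]
      rw [e]
      calc |1 + 2*L/Real.log x| ≤ |1| + |2*L/Real.log x| := abs_add_le _ _
        _ = 1 + 2*L/(-Real.log x) := by
            rw [abs_one, abs_div, abs_of_neg hlx, abs_of_nonneg (by linarith : (0:ℝ) ≤ 2*L)]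
        _ ≤ 1 + 2*L/(-Real.log a) := by
            gcongr <;> linarith
        _ = K := rfl
    have hterm1 : |(-(2*L)) * (2*N*deriv h (N*x)*h (N*x)*(Real.log (N*x)/Real.log x))|
        ≤ 4*L*N*M1*M0*K := by
      rw [abs_mul, abs_mul, abs_mul, abs_mul, abs_neg,
        abs_of_nonneg (by linarith : (0:ℝ) ≤ 2*L),
        abs_of_nonneg (by linarith : (0:ℝ) ≤ 2*N)]
      have b1 : |deriv h (N*x)| * |h (N*x)| ≤ M1 * M0 :=
        mul_le_mul hb1' hb0' (abs_nonneg _) hM1nn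
      have b2 : 2*N*(|deriv h (N*x)| * |h (N*x)|) ≤ 2*N*(M1*M0) :=
        mul_le_mul_of_nonneg_left b1 (by linarith)
      have b3 : (2*N*(|deriv h (N*x)| * |h (N*x)|)) * |Real.log (N*x)/Real.log x|
          ≤ (2*N*(M1*M0))*K :=
        mul_le_mul b2 hratio (abs_nonneg _)
          (mul_nonneg (by linarith) (mul_nonneg hM1nn hM0nn))
      have b4 := mul_le_mul_of_nonneg_left b3 (show (0:ℝ) ≤ 2*L by linarith)
      linarith [b4]
    have hterm2 : |4*L^2 * ((h (N*x))^2/(x*(Real.log x)^2))|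
        ≤ 4*L^2*M0^2*(1/(x*(Real.log x)^2)) := by
      have hlx2 : (0:ℝ) < (Real.log x)^2 := by
        rw [sq]; exact mul_pos_of_neg_of_neg hlx hlx
      have hpos : 0 < x*(Real.log x)^2 := mul_pos hx0 hlx2
      have hnn : 0 ≤ 4*L^2 * ((h (N*x))^2/(x*(Real.log x)^2)) :=
        mul_nonneg (by positivity) (div_nonneg (sq_nonneg _) hpos.le)
      rw [abs_of_nonneg hnn]
      rw [div_eq_mul_one_div ((h (N*x))^2) (x*(Real.log x)^2)]
      have e1 : (h (N*x))^2 ≤ M0^2 := by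
        calc (h (N*x))^2 = |h (N*x)|^2 := (sq_abs _).symm
          _ ≤ M0^2 := pow_le_pow_left₀ (abs_nonneg _) hb0' 2
      have h5 := mul_le_mul_of_nonneg_right e1
        (le_of_lt (one_div_pos.mpr hpos))
      have h6 := mul_le_mul_of_nonneg_left h5 (by positivity : (0:ℝ) ≤ 4*L^2)
      linarith [h6]
    calc |Fd x| ≤ |(-(2*L)) * (2*N*deriv h (N*x)*h (N*x)*(Real.log (N*x)/Real.log x))|
          + |4*L^2 * ((h (N*x))^2/(x*(Real.log x)^2))| := by
          simp only [hFddef]; exact abs_add_le _ _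
      _ ≤ 4*L*N*M1*M0*K + 4*L^2*M0^2*(1/(x*(Real.log x)^2)) := add_le_add hterm1 hterm2
      _ = (4*L*N*M1*M0*K) + 0*(Real.log x)^2 + (4*L^2*M0^2)*(1/(x*(Real.log x)^2)) := by ring
  have hFdint : IntegrableOn Fd (Ioc 0 a) := aux_int_of_bound ha0 ha1 Fd hFdcont _ _ _ hFdbd
  -- derivative
  have hFderiv : ∀ x ∈ Ioo (0:ℝ) a, HasDerivAt F (Fd x) x := by
    intro x hx
    obtain ⟨hx0, hlx, hNx0, hlNx, -, -, -⟩ := hfacts x ⟨hx.1, hx.2.le⟩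
    have hlxne : Real.log x ≠ 0 := ne_of_lt hlx
    have hc1 : HasDerivAt (fun y : ℝ => N * y) N x := by
      simpa using (hasDerivAt_id x).const_mul N
    have hc2 : HasDerivAt (fun y => h (N * y)) (deriv h (N*x) * N) x :=
      ((hdiff (N*x)).hasDerivAt).comp x hc1
    have hsq : HasDerivAt (fun y => (h (N*y))^2) (2 * h (N*x) * (deriv h (N*x) * N)) x := by
      simpa using hc2.fun_pow 2
    have hlog1 : HasDerivAt (fun y => Real.log (N*y)) ((N*x)⁻¹ * N) x :=
      (Real.hasDerivAt_log hNx0.ne').comp x hc1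
    have hlog2 : HasDerivAt Real.log x⁻¹ x := Real.hasDerivAt_log hx0.ne'
    have hdiv : HasDerivAt (fun y => Real.log (N*y) / Real.log y)
        (((N*x)⁻¹ * N * Real.log x - Real.log (N*x) * x⁻¹) / (Real.log x)^2) x :=
      hlog1.div hlog2 hlxne
    have hprod := (hsq.mul hdiv).const_mul (-(2*L))
    simp only [hFdef, hFddef]
    refine hprod.congr_deriv ?_
    rw [hlNx]
    field_simp
    ring
  -- limits
  have hF0 : Tendsto F (nhdsWithin 0 (Ioi 0)) (nhds (-(2*L))) := by
    have hmem : Ioc (0:ℝ) a ∈ nhdsWithin (0:ℝ) (Ioi 0) := Ioc_mem_nhdsGT ha0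
    have hNy : Tendsto (fun y : ℝ => N * y) (nhdsWithin 0 (Ioi 0)) (nhds 0) := by
      have h1 : Continuous (fun y : ℝ => N * y) := continuous_const.mul continuous_id
      have h2 := (h1.tendsto 0).mono_left (nhdsWithin_le_nhds (s := Ioi (0:ℝ)))
      simpa using h2
    have hhny : Tendsto (fun y => h (N*y)) (nhdsWithin 0 (Ioi 0)) (nhds 1) := by
      have := (hhc.tendsto 0).comp hNy
      simpa [hh0, Function.comp_def] using this
    have hinv : Tendsto (fun y : ℝ => (Real.log y)⁻¹) (nhdsWithin 0 (Ioi 0)) (nhds 0) := by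
      have h2 : Tendsto (fun y => -Real.log y) (nhdsWithin 0 (Ioi 0)) atTop :=
        Filter.tendsto_neg_atBot_atTop.comp Real.tendsto_log_nhdsGT_zero
      have h3 := h2.inv_tendsto_atTop
      have heq : (fun y : ℝ => (Real.log y)⁻¹) = fun y => -((fun y : ℝ => -Real.log y)⁻¹ y) := by
        funext y; simp [inv_neg]
      rw [heq]
      simpa using h3.neg
    have hmain : Tendsto (fun y => -(2*L) * ((h (N*y))^2 * (1 + 2*L*(Real.log y)⁻¹)))
        (nhdsWithin 0 (Ioi 0)) (nhds (-(2*L) * ((1:ℝ)^2 * (1 + 2*L*0)))) :=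
      tendsto_const_nhds.mul ((hhny.pow 2).mul
        (tendsto_const_nhds.add (tendsto_const_nhds.mul hinv)))
    have heq2 : ∀ᶠ y in nhdsWithin 0 (Ioi 0),
        -(2*L) * ((h (N*y))^2 * (1 + 2*L*(Real.log y)⁻¹)) = F y := by
      filter_upwards [hmem] with y hy
      obtain ⟨hy0, hly, hNy0, hlNy, -, -, -⟩ := hfacts y hy
      have hlyne : Real.log y ≠ 0 := ne_of_lt hly
      simp only [hFdef]
      have e : Real.log (N*y)/Real.log y = 1 + 2*L*(Real.log y)⁻¹ := by
        rw [hlNy, add_div, div_self hlyne, add_comm, div_eq_mul_inv]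
      rw [e]
    have := hmain.congr' heq2
    simpa using this
  have hFa : Tendsto F (nhdsWithin a (Iio a)) (nhds 0) := by
    have hNane : N*a ≠ 0 := hNa0.ne'
    have hlane : Real.log a ≠ 0 := ne_of_lt hla
    have hcl : ContinuousAt (fun y : ℝ => N*y) a := (continuous_const.mul continuous_id).continuousAt
    have hcont : ContinuousAt F a := by
      simp only [hFdef]
      exact continuousAt_const.mul (((hhc.continuousAt.comp hcl).pow 2).mul
        (((Real.continuousAt_log hNane).comp hcl).div
          (Real.continuousAt_log ha0.ne') hlane))
    have hFa0 : F a = 0 := by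
      have hz : h (N*a) = 0 := hb _ (by linarith)
      simp [hFdef, hz]
    have := hcont.tendsto.mono_left (nhdsWithin_le_nhds (s := Iio a))
    rwa [hFa0] at this
  -- FTC
  have hFdII : IntervalIntegrable Fd volume 0 a := by
    rw [intervalIntegrable_iff_integrableOn_Ioc_of_le ha0.le]; exact hFdint
  have hQII : IntervalIntegrable Q volume 0 a := by
    rw [intervalIntegrable_iff_integrableOn_Ioc_of_le ha0.le]; exact hQint
  have hFTC : ∫ x in (0:ℝ)..a, Fd x = 0 - (-(2*L)) :=
    intervalIntegral.integral_eq_sub_of_hasDerivAt_of_tendsto ha0 hFderiv hFdII hF0 hFa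
  -- value of ∫ Q
  have hqII1 : IntervalIntegrable q volume 0 b := by
    rw [intervalIntegrable_iff_integrableOn_Ioc_of_le hb0.le]
    apply aux_int_of_bound hb0 hb1 q
      (fun u hu => (hqcont u (ne_of_gt hu.1)).continuousWithinAt)
      0 (M0^2 + b*M1^2) 0
    intro u hu
    have hu0 : 0 < u := hu.1
    have hub : u ≤ b := hu.2
    have hmem : u ∈ Icc (0:ℝ) (N*a) := ⟨hu0.le, by linarith⟩
    have hb0' : |h u| ≤ M0 := by simpa [Real.norm_eq_abs] using hM0 _ hmem
    have hb1' : |deriv h u| ≤ M1 := by simpa [Real.norm_eq_abs] using hM1 _ hmem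
    have e1 : (h u)^2 ≤ M0^2 := by
      calc (h u)^2 = |h u|^2 := (sq_abs _).symm
        _ ≤ M0^2 := pow_le_pow_left₀ (abs_nonneg _) hb0' 2
    have e2 : (deriv h u)^2 ≤ M1^2 := by
      calc (deriv h u)^2 = |deriv h u|^2 := (sq_abs _).symm
        _ ≤ M1^2 := pow_le_pow_left₀ (abs_nonneg _) hb1' 2
    have hqnn : 0 ≤ q u := by
      simp only [hq]
      exact mul_nonneg (add_nonneg (sq_nonneg _) (mul_nonneg hu0.le (sq_nonneg _)))
        (sq_nonneg _)
    rw [abs_of_nonneg hqnn]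
    simp only [hq]
    have hinner : (h u)^2 + u*(deriv h u)^2 ≤ M0^2 + b*M1^2 := by
      nlinarith [sq_nonneg (deriv h u)]
    linarith [mul_le_mul_of_nonneg_right hinner (sq_nonneg (Real.log u))]
  have hq0 : ∀ u ∈ Ioc b (N*a), q u = 0 := by
    intro u hu
    simp only [hq]
    simp [hb u hu.1.le, hderivb u hu.1]
  have hqII2 : IntervalIntegrable q volume b (N*a) := by
    rw [intervalIntegrable_iff_integrableOn_Ioc_of_le hbNa.le]
    exact (integrableOn_congr_fun hq0 measurableSet_Ioc).mpr (integrableOn_zero)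
  have hint2 : ∫ u in b..(N*a), q u = 0 := by
    rw [intervalIntegral.integral_of_le hbNa.le,
      MeasureTheory.setIntegral_congr_fun measurableSet_Ioc hq0]
    simp
  have hQval : (∫ x in (0:ℝ)..a, Q x) = ∫ u in (0:ℝ)..b, q u := by
    have h1 : (∫ x in (0:ℝ)..a, Q x) = N * ∫ x in (0:ℝ)..a, q (N*x) := by
      simp only [hQdef]
      exact intervalIntegral.integral_const_mul N _
    rw [h1, intervalIntegral.mul_integral_comp_mul_left, mul_zero,
      ← intervalIntegral.integral_add_adjacent_intervals hqII1 hqII2, hint2, add_zero]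
  -- assemble
  have key : (∫ x in (0 : ℝ)..a,
          (N * (h (N * x) * (1 + 2 * L / Real.log x)) ^ 2
            + x * (N * deriv h (N * x) * Real.log (N * x) / Real.log x
                - 2 * L * h (N * x) / (x * (Real.log x) ^ 2)) ^ 2)
            * (Real.log x) ^ 2) = (∫ u in (0:ℝ)..b, q u) + 2 * L := by
    have hsplit : (∫ x in (0 : ℝ)..a,
          (N * (h (N * x) * (1 + 2 * L / Real.log x)) ^ 2
            + x * (N * deriv h (N * x) * Real.log (N * x) / Real.log x
                - 2 * L * h (N * x) / (x * (Real.log x) ^ 2)) ^ 2)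
            * (Real.log x) ^ 2) = ∫ x in (0:ℝ)..a, (Q x + Fd x) := by
      apply intervalIntegral.integral_congr_ae
      filter_upwards with x hx
      rw [Set.uIoc_of_le ha0.le] at hx
      exact hPQ x hx
    rw [hsplit, intervalIntegral.integral_add hQII hFdII, hQval, hFTC]
    ring
  rw [key]
  simp
end

section
/- Let γ ∈ (0,1), s > 1 + γ, and for nonnegative integers n, k with 0 ≤ k ≤ n define (n_{n,k}^γ)² = (π/(n+γ+1)) · Γ(n-k+1)Γ(γ+1)Γ(k+1)Γ(γ+1) / (Γ(k+γ+1)Γ(n-k+γ+1)). Then for any doubly-indexed square-summable family (u_{n,k}) with ∑_{n,k}(n+1+γ)^{2s}|u_{n,k}|² < ∞, the family v_m := ∑_{n-2k=m} u_{n,k}/n_{n,k}^γ (sum over pairs (n,k) with 0 ≤ k ≤ n and n-2k = m) satisfies ∑_{m∈ℤ} ⟨m⟩^{2s-2γ-2} |v_m|² ≤ C ∑_{n,k}(n+1+γ)^{2s}|u_{n,k}|² for a constant C depending only on s and γ. -/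
open Real

/-- `(n_{n,k}^γ)² = (π/(n+γ+1)) Γ(n-k+1)Γ(γ+1)Γ(k+1)Γ(γ+1)/(Γ(k+γ+1)Γ(n-k+γ+1))`,
the squared `L²_γ` norm of the generalized Zernike polynomial `G_{n,k}^γ`. -/
noncomputable def zernikeNormSq (γ : ℝ) (n k : ℕ) : ℝ :=
  (Real.pi / ((n : ℝ) + γ + 1)) *
    (Real.Gamma ((n : ℝ) - (k : ℝ) + 1) * Real.Gamma (γ + 1) *
      Real.Gamma ((k : ℝ) + 1) * Real.Gamma (γ + 1)) /
    (Real.Gamma ((k : ℝ) + γ + 1) * Real.Gamma ((n : ℝ) - (k : ℝ) + γ + 1))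

/-- The pairs `(n,k)` with `0 ≤ k ≤ n` and `n - 2k = m` are parametrized by `ℓ ≥ 0` as
`n = |m| + 2ℓ`, `k = max(0,-m) + ℓ`. -/
def nIdx (m : ℤ) (ℓ : ℕ) : ℕ := m.natAbs + 2 * ℓ
def kIdx (m : ℤ) (ℓ : ℕ) : ℕ := (if m < 0 then m.natAbs else 0) + ℓ

lemma gamma_ratio {γ : ℝ} (hγ0 : 0 < γ) (hγ1 : γ < 1) {x : ℝ} (hx : 0 < x) :
    Real.Gamma (x + γ) ≤ Real.Gamma x * x ^ γ := by
  have h := Real.Gamma_mul_add_mul_le_rpow_Gamma_mul_rpow_Gamma (s := x) (t := x + 1)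
    (a := 1 - γ) (b := γ) hx (by linarith) (by linarith) hγ0 (by ring)
  rw [show (1 - γ) * x + γ * (x + 1) = x + γ by ring] at h
  have hΓ : 0 < Real.Gamma x := Real.Gamma_pos_of_pos hx
  calc Real.Gamma (x + γ) ≤ Real.Gamma x ^ (1-γ) * Real.Gamma (x+1) ^ γ := h
    _ = Real.Gamma x * x ^ γ := by
      rw [Real.Gamma_add_one hx.ne', Real.mul_rpow hx.le hΓ.le,
        mul_comm (x ^ γ), ← mul_assoc, ← Real.rpow_add hΓ]
      norm_num

lemma zern_pos {γ : ℝ} (hγ0 : 0 < γ) {n k : ℕ} (hkn : k ≤ n) :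
    0 < zernikeNormSq γ n k := by
  have hx : (0:ℝ) ≤ (n:ℝ) - (k:ℝ) := by
    have := Nat.cast_le (α := ℝ) |>.mpr hkn; linarith
  have h1 : 0 < Real.Gamma ((n:ℝ) - (k:ℝ) + 1) := Real.Gamma_pos_of_pos (by linarith)
  have h2 : 0 < Real.Gamma (γ + 1) := Real.Gamma_pos_of_pos (by linarith)
  have h3 : 0 < Real.Gamma ((k:ℝ) + 1) := Real.Gamma_pos_of_pos (by positivity)
  have h4 : 0 < Real.Gamma ((k:ℝ) + γ + 1) := Real.Gamma_pos_of_pos (by positivity)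
  have h5 : 0 < Real.Gamma ((n:ℝ) - (k:ℝ) + γ + 1) := Real.Gamma_pos_of_pos (by linarith)
  have hπ : (0:ℝ) < Real.pi := Real.pi_pos
  have hn : (0:ℝ) < (n:ℝ) + γ + 1 := by positivity
  unfold zernikeNormSq
  positivity
lemma wBound {γ s : ℝ} (hγ0 : 0 < γ) (hγ1 : γ < 1) (hs : 1 + γ < s) {n k : ℕ} (hkn : k ≤ n) :
    (((n:ℝ) + 1 + γ) ^ (2*s))⁻¹ * (zernikeNormSq γ n k)⁻¹ ≤
      (2 / (Real.pi * Real.Gamma (γ+1)^2)) * ((n:ℝ)+1) ^ (-(2*s-1-2*γ)) := by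
  have hx : (0:ℝ) ≤ (n:ℝ) - (k:ℝ) := by
    have := Nat.cast_le (α := ℝ) |>.mpr hkn; linarith
  have h1 : 0 < Real.Gamma ((n:ℝ) - (k:ℝ) + 1) := Real.Gamma_pos_of_pos (by linarith)
  have h2 : 0 < Real.Gamma (γ + 1) := Real.Gamma_pos_of_pos (by linarith)
  have h3 : 0 < Real.Gamma ((k:ℝ) + 1) := Real.Gamma_pos_of_pos (by positivity)
  have h4 : 0 < Real.Gamma ((k:ℝ) + γ + 1) := Real.Gamma_pos_of_pos (by positivity)
  have h5 : 0 < Real.Gamma ((n:ℝ) - (k:ℝ) + γ + 1) := Real.Gamma_pos_of_pos (by linarith)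
  have hπ : (0:ℝ) < Real.pi := Real.pi_pos
  have hQ : (0:ℝ) < (n:ℝ) + 1 := by positivity
  have hP : (0:ℝ) < ((n:ℝ)+1) ^ γ := Real.rpow_pos_of_pos hQ γ
  have hr1 : Real.Gamma ((k:ℝ) + γ + 1) ≤ Real.Gamma ((k:ℝ)+1) * ((n:ℝ)+1) ^ γ := by
    have h := gamma_ratio hγ0 hγ1 (x := (k:ℝ)+1) (by positivity)
    rw [show (k:ℝ) + 1 + γ = (k:ℝ) + γ + 1 by ring] at h
    refine h.trans ?_
    have : ((k:ℝ)+1) ^ γ ≤ ((n:ℝ)+1) ^ γ := by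
      apply Real.rpow_le_rpow (by positivity) (by exact_mod_cast by omega) hγ0.le
    nlinarith [h3]
  have hr2 : Real.Gamma ((n:ℝ) - (k:ℝ) + γ + 1) ≤
      Real.Gamma ((n:ℝ)-(k:ℝ)+1) * ((n:ℝ)+1) ^ γ := by
    have h := gamma_ratio hγ0 hγ1 (x := (n:ℝ)-(k:ℝ)+1) (by linarith)
    rw [show (n:ℝ) - (k:ℝ) + 1 + γ = (n:ℝ) - (k:ℝ) + γ + 1 by ring] at h
    refine h.trans ?_
    have hk0 : (0:ℝ) ≤ (k:ℝ) := by positivity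
    have hle : ((n:ℝ)-(k:ℝ)+1) ^ γ ≤ ((n:ℝ)+1) ^ γ :=
      Real.rpow_le_rpow (by linarith) (by linarith) hγ0.le
    nlinarith [h1]
  have hinv : (zernikeNormSq γ n k)⁻¹ =
      (((n:ℝ)+γ+1) * Real.Gamma ((k:ℝ)+γ+1) * Real.Gamma ((n:ℝ)-(k:ℝ)+γ+1)) /
        (Real.pi * Real.Gamma ((n:ℝ)-(k:ℝ)+1) * Real.Gamma (γ+1)^2 * Real.Gamma ((k:ℝ)+1)) := by
    unfold zernikeNormSq
    have hn1 : ((n:ℝ)+γ+1) ≠ 0 := by positivity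
    field_simp [hπ.ne', h1.ne', h2.ne', h3.ne', h4.ne', h5.ne', hn1]
  have hA : (((n:ℝ) + 1 + γ) ^ (2*s))⁻¹ ≤ ((n:ℝ)+1) ^ (-(2*s)) := by
    rw [← Real.rpow_neg (by positivity)]
    exact Real.rpow_le_rpow_of_nonpos hQ (by linarith) (by linarith)
  have hZ : (zernikeNormSq γ n k)⁻¹ ≤
      (2*((n:ℝ)+1)) * (Real.Gamma ((k:ℝ)+1) * ((n:ℝ)+1)^γ) *
        (Real.Gamma ((n:ℝ)-(k:ℝ)+1) * ((n:ℝ)+1)^γ) /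
        (Real.pi * Real.Gamma ((n:ℝ)-(k:ℝ)+1) * Real.Gamma (γ+1)^2 * Real.Gamma ((k:ℝ)+1)) := by
    rw [hinv]
    apply div_le_div_of_nonneg_right ?_ (by positivity)
    have h0 : ((n:ℝ)+γ+1) ≤ 2*((n:ℝ)+1) := by linarith
    have e1 : ((n:ℝ)+γ+1) * Real.Gamma ((k:ℝ)+γ+1) ≤
        (2*((n:ℝ)+1)) * (Real.Gamma ((k:ℝ)+1) * ((n:ℝ)+1)^γ) :=
      mul_le_mul h0 hr1 h4.le (by positivity)
    exact mul_le_mul e1 hr2 h5.le (by positivity)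
  have hE : ((n:ℝ)+1) ^ (-(2*s-1-2*γ)) =
      ((n:ℝ)+1) ^ (-(2*s)) * ((n:ℝ)+1) ^ (1:ℝ) * ((n:ℝ)+1) ^ γ * ((n:ℝ)+1) ^ γ := by
    rw [← Real.rpow_add hQ, ← Real.rpow_add hQ, ← Real.rpow_add hQ]; ring_nf
  have hZnn : (0:ℝ) ≤ (zernikeNormSq γ n k)⁻¹ := (inv_pos.mpr (zern_pos hγ0 hkn)).le
  calc (((n:ℝ) + 1 + γ) ^ (2*s))⁻¹ * (zernikeNormSq γ n k)⁻¹
      ≤ ((n:ℝ)+1) ^ (-(2*s)) *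
        ((2*((n:ℝ)+1)) * (Real.Gamma ((k:ℝ)+1) * ((n:ℝ)+1)^γ) *
          (Real.Gamma ((n:ℝ)-(k:ℝ)+1) * ((n:ℝ)+1)^γ) /
          (Real.pi * Real.Gamma ((n:ℝ)-(k:ℝ)+1) * Real.Gamma (γ+1)^2 * Real.Gamma ((k:ℝ)+1))) := by
        apply mul_le_mul hA hZ hZnn (by positivity)
    _ = (2 / (Real.pi * Real.Gamma (γ+1)^2)) * ((n:ℝ)+1) ^ (-(2*s-1-2*γ)) := by
        rw [hE, Real.rpow_one]
        field_simp [hπ.ne', h1.ne', h2.ne', h3.ne']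
lemma tail_bound_s19 {t : ℝ} (ht : 1 < t) (a : ℕ) :
    Summable (fun ℓ : ℕ => ((a:ℝ) + 2*ℓ + 1) ^ (-t)) ∧
      ∑' ℓ : ℕ, ((a:ℝ) + 2*ℓ + 1) ^ (-t) ≤
        (∑' j : ℕ, ((j:ℝ)+1) ^ (-t)) * ((a:ℝ)+1) ^ (1-t) := by
  set N : ℕ := a + 1 with hN
  haveI : NeZero N := ⟨Nat.succ_ne_zero a⟩
  have hNpos : (0:ℝ) < (N:ℝ) := by positivity
  set F : ℕ → ℝ := fun j => ((j:ℝ)+1) ^ (-t) with hF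
  have hFsum : Summable F := by
    have h := Real.summable_nat_rpow (p := -t) |>.mpr (by linarith)
    have := h.comp_injective (add_left_injective 1)
    refine this.congr fun j => ?_
    simp [Function.comp, F]
  have hFnn : ∀ j, 0 ≤ F j := fun j => Real.rpow_nonneg (by positivity) _
  set G : ℕ × Fin N → ℝ := fun p => F p.1 with hG
  have hGsum : Summable G := by
    apply (summable_prod_of_nonneg (fun p => hFnn p.1)).mpr
    constructor
    · intro j; exact Summable.of_finite
    · refine ((hFsum.mul_left (N:ℝ)).congr fun j => ?_)
      simp [G, tsum_fintype]
  have hcomp : Summable (fun ℓ : ℕ => F (ℓ / N)) := by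
    have := hGsum.comp_injective (Nat.divModEquiv N).injective
    exact this.congr fun ℓ => rfl
  have hdom : ∀ ℓ : ℕ, ((a:ℝ) + 2*ℓ + 1) ^ (-t) ≤ (N:ℝ) ^ (-t) * F (ℓ / N) := by
    intro ℓ
    have hdiv : N * (ℓ / N + 1) ≤ a + 2*ℓ + 1 := by
      have h2 : N * (ℓ / N) ≤ ℓ := by rw [mul_comm]; exact Nat.div_mul_le_self ℓ N
      have h3 : N * (ℓ / N + 1) = N * (ℓ / N) + N := by ring
      omega
    have hcast : ((N:ℝ)) * (((ℓ / N : ℕ) : ℝ) + 1) ≤ (a:ℝ) + 2*ℓ + 1 := by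
      exact_mod_cast hdiv
    rw [hF, ← Real.mul_rpow hNpos.le (by positivity)]
    exact Real.rpow_le_rpow_of_nonpos (by positivity) hcast (by linarith)
  have hsum1 : Summable (fun ℓ : ℕ => ((a:ℝ) + 2*ℓ + 1) ^ (-t)) := by
    apply Summable.of_nonneg_of_le (fun ℓ => Real.rpow_nonneg (by positivity) _) hdom
      (hcomp.mul_left _)
  refine ⟨hsum1, ?_⟩
  have step1 : ∑' ℓ : ℕ, ((a:ℝ) + 2*ℓ + 1) ^ (-t) ≤
      ∑' ℓ : ℕ, (N:ℝ) ^ (-t) * F (ℓ / N) :=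
    Summable.tsum_le_tsum hdom hsum1 (hcomp.mul_left _)
  have step2 : ∑' ℓ : ℕ, (N:ℝ) ^ (-t) * F (ℓ / N) =
      (N:ℝ) ^ (-t) * ((N:ℝ) * ∑' j, F j) := by
    rw [tsum_mul_left]
    congr 1
    have e1 : ∑' ℓ : ℕ, F (ℓ / N) = ∑' p : ℕ × Fin N, G p :=
      ((Nat.divModEquiv N).tsum_eq G)
    rw [e1, Summable.tsum_prod' hGsum (fun j => Summable.of_finite)]
    rw [← tsum_mul_left]
    congr 1; funext j
    simp [G, tsum_fintype]
  have step3 : (N:ℝ) ^ (-t) * ((N:ℝ) * ∑' j, F j) =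
      (∑' j, F j) * ((a:ℝ)+1) ^ (1-t) := by
    have hNa : ((N:ℝ)) = (a:ℝ) + 1 := by push_cast [hN]; ring
    rw [hNa]
    have : ((a:ℝ)+1) ^ (1-t) = ((a:ℝ)+1) ^ (-t) * ((a:ℝ)+1) ^ (1:ℝ) := by
      rw [← Real.rpow_add (by positivity)]; ring_nf
    rw [this, Real.rpow_one]; ring
  calc ∑' ℓ : ℕ, ((a:ℝ) + 2*ℓ + 1) ^ (-t) ≤ ∑' ℓ : ℕ, (N:ℝ) ^ (-t) * F (ℓ / N) := step1
    _ = (N:ℝ) ^ (-t) * ((N:ℝ) * ∑' j, F j) := step2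
    _ = (∑' j, F j) * ((a:ℝ)+1) ^ (1-t) := step3
lemma tsum_cauchy_schwarz (f g : ℕ → ℝ) (hf : Summable fun i => f i ^ 2)
    (hg : Summable fun i => g i ^ 2) :
    Summable (fun i => f i * g i) ∧
      (∑' i, f i * g i) ^ 2 ≤ (∑' i, f i ^ 2) * (∑' i, g i ^ 2) := by
  have habs : Summable (fun i => |f i * g i|) := by
    apply Summable.of_nonneg_of_le (fun i => abs_nonneg _)
      (fun i => ?_) ((hf.add hg).div_const 2)
    have h1 := sq_nonneg (|f i| - |g i|)
    have h2 : |f i| ^ 2 = f i ^ 2 := sq_abs _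
    have h3 : |g i| ^ 2 = g i ^ 2 := sq_abs _
    rw [abs_mul]
    nlinarith [abs_nonneg (f i), abs_nonneg (g i)]
  have hfg : Summable (fun i => f i * g i) := habs.of_abs
  refine ⟨hfg, ?_⟩
  have hPnn : 0 ≤ (∑' i, f i ^ 2) * (∑' i, g i ^ 2) :=
    mul_nonneg (tsum_nonneg fun i => sq_nonneg _) (tsum_nonneg fun i => sq_nonneg _)
  have hub : ∑' i, |f i * g i| ≤ Real.sqrt ((∑' i, f i ^ 2) * (∑' i, g i ^ 2)) := by
    apply Summable.tsum_le_of_sum_le habs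
    intro s
    have hcs := Finset.sum_mul_sq_le_sq_mul_sq s (fun i => |f i|) (fun i => |g i|)
    have e1 : ∀ i, |f i| * |g i| = |f i * g i| := fun i => (abs_mul _ _).symm
    have e2 : ∀ i, |f i| ^ 2 = f i ^ 2 := fun i => sq_abs _
    have e3 : ∀ i, |g i| ^ 2 = g i ^ 2 := fun i => sq_abs _
    simp only [e1, e2, e3] at hcs
    have hb : (∑ i ∈ s, f i ^ 2) * (∑ i ∈ s, g i ^ 2) ≤
        (∑' i, f i ^ 2) * (∑' i, g i ^ 2) := by
      apply mul_le_mul (Summable.sum_le_tsum s (fun i _ => sq_nonneg _) hf)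
        (Summable.sum_le_tsum s (fun i _ => sq_nonneg _) hg)
        (Finset.sum_nonneg fun i _ => sq_nonneg _)
        (tsum_nonneg fun i => sq_nonneg _)
    exact (Real.le_sqrt (Finset.sum_nonneg fun i _ => abs_nonneg _) hPnn).mpr (hcs.trans hb)
  have h1 : |∑' i, f i * g i| ≤ ∑' i, |f i * g i| := by
    have hle := Summable.tsum_le_tsum (fun i => le_abs_self (f i * g i)) hfg habs
    have hge := Summable.tsum_le_tsum (fun i => neg_abs_le (f i * g i)) habs.neg hfg
    rw [tsum_neg] at hge
    rw [abs_le]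
    constructor <;> linarith
  calc (∑' i, f i * g i) ^ 2 = |∑' i, f i * g i| ^ 2 := (sq_abs _).symm
    _ ≤ (Real.sqrt ((∑' i, f i ^ 2) * (∑' i, g i ^ 2))) ^ 2 := by
        apply pow_le_pow_left₀ (abs_nonneg _) (h1.trans hub)
    _ = (∑' i, f i ^ 2) * (∑' i, g i ^ 2) := Real.sq_sqrt hPnn

lemma idx_sub (m : ℤ) (ℓ : ℕ) : (nIdx m ℓ : ℤ) - 2 * (kIdx m ℓ : ℤ) = m := by
  simp only [nIdx, kIdx]
  split <;> omega

lemma kIdx_le_nIdx (m : ℤ) (ℓ : ℕ) : kIdx m ℓ ≤ nIdx m ℓ := by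
  simp only [nIdx, kIdx]; split <;> omega

lemma sigma_inj : Function.Injective (fun p : ℤ × ℕ => (nIdx p.1 p.2, kIdx p.1 p.2)) := by
  rintro ⟨m, ℓ⟩ ⟨m', ℓ'⟩ h
  simp only [Prod.mk.injEq] at h
  obtain ⟨h1, h2⟩ := h
  have hm : m = m' := by
    have e1 := idx_sub m ℓ
    have e2 := idx_sub m' ℓ'
    rw [h1, h2] at e1
    omega
  subst hm
  simp only [kIdx] at h2
  have : ℓ = ℓ' := by omega
  simp [this]
lemma weight_le {s γ : ℝ} (h : 0 ≤ s - γ - 1) (m : ℤ) :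
    (1 + (m:ℝ)^2) ^ (s - γ - 1) ≤ ((m.natAbs:ℝ)+1) ^ (2*s-1-2*γ-1) := by
  have hsq : ((m.natAbs:ℝ))^2 = (m:ℝ)^2 := by
    have h0 := congrArg (fun z : ℤ => (z:ℝ)) (Int.natAbs_sq m)
    push_cast [Nat.cast_natAbs] at h0 ⊢
    exact h0
  have ha : (0:ℝ) ≤ (m.natAbs:ℝ) := by positivity
  have h1 : 1 + (m:ℝ)^2 ≤ ((m.natAbs:ℝ)+1)^2 := by nlinarith
  have h2 := Real.rpow_le_rpow (by positivity) h1 h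
  refine h2.trans_eq ?_
  rw [← Real.rpow_natCast ((m.natAbs:ℝ)+1) 2, ← Real.rpow_mul (by positivity)]
  congr 1
  push_cast
  ring

lemma sigma_inj_right (m : ℤ) :
    Function.Injective (fun ℓ : ℕ => ((nIdx m ℓ, kIdx m ℓ) : ℕ × ℕ)) := by
  intro a b h
  have h2 : ((m, a) : ℤ × ℕ) = (m, b) := sigma_inj h
  simpa using h2
set_option maxHeartbeats 1000000 in
/-- boundedness of the Neumann trace on the Dirichlet Sobolev scale, in
Fourier–Zernike coordinates: for `γ ∈ (0,1)` and `s > 1+γ` there is `C` (depending only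
on `s, γ`) such that for every square-summable family `(u_{n,k})_{0≤k≤n}` with
`∑ (n+1+γ)^{2s}|u_{n,k}|² < ∞`, the sums `v_m = ∑_{n-2k=m} u_{n,k}/n_{n,k}^γ` satisfy
`∑_m ⟨m⟩^{2s-2γ-2} |v_m|² ≤ C ∑_{n,k} (n+1+γ)^{2s} |u_{n,k}|²`. -/
theorem neumann_trace_fourier_bound (γ s : ℝ) (hγ : γ ∈ Set.Ioo (0 : ℝ) 1)
    (hs : 1 + γ < s) :
    ∃ C > (0 : ℝ), ∀ u : ℕ → ℕ → ℝ,
      (∀ n k, n < k → u n k = 0) →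
      Summable (fun p : ℕ × ℕ => ((p.1 : ℝ) + 1 + γ) ^ (2 * s) * (u p.1 p.2) ^ 2) →
      (∀ m : ℤ, Summable (fun ℓ : ℕ =>
          u (nIdx m ℓ) (kIdx m ℓ) / Real.sqrt (zernikeNormSq γ (nIdx m ℓ) (kIdx m ℓ)))) ∧
      Summable (fun m : ℤ => (1 + (m : ℝ) ^ 2) ^ (s - γ - 1) *
          (∑' ℓ : ℕ,
            u (nIdx m ℓ) (kIdx m ℓ) / Real.sqrt (zernikeNormSq γ (nIdx m ℓ) (kIdx m ℓ))) ^ 2) ∧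
      ∑' m : ℤ, (1 + (m : ℝ) ^ 2) ^ (s - γ - 1) *
          (∑' ℓ : ℕ,
            u (nIdx m ℓ) (kIdx m ℓ) / Real.sqrt (zernikeNormSq γ (nIdx m ℓ) (kIdx m ℓ))) ^ 2
        ≤ C * ∑' p : ℕ × ℕ, ((p.1 : ℝ) + 1 + γ) ^ (2 * s) * (u p.1 p.2) ^ 2 := by
  obtain ⟨hγ0, hγ1⟩ := hγ
  have ht1 : (1:ℝ) < 2*s - 1 - 2*γ := by linarith
  have hΓγ : 0 < Real.Gamma (γ+1) := Real.Gamma_pos_of_pos (by linarith)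
  have hπ : (0:ℝ) < Real.pi := Real.pi_pos
  have hB : (0:ℝ) < 2 / (Real.pi * Real.Gamma (γ+1)^2) :=
    div_pos two_pos (mul_pos hπ (pow_pos hΓγ 2))
  have hKsum : Summable (fun j : ℕ => ((j:ℝ)+1) ^ (-(2*s-1-2*γ))) := by
    have h := Real.summable_nat_rpow (p := -(2*s-1-2*γ)) |>.mpr (by linarith)
    have h2 := h.comp_injective (add_left_injective 1)
    refine h2.congr fun j => ?_
    simp [Function.comp]
  have hK : (0:ℝ) < ∑' j : ℕ, ((j:ℝ)+1) ^ (-(2*s-1-2*γ)) := by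
    apply Summable.tsum_pos hKsum (fun j => Real.rpow_nonneg (by positivity) _) 0
    exact Real.rpow_pos_of_pos (by norm_num) _
  refine ⟨(2 / (Real.pi * Real.Gamma (γ+1)^2)) * ∑' j : ℕ, ((j:ℝ)+1) ^ (-(2*s-1-2*γ)),
    mul_pos hB hK, ?_⟩
  intro u _ hU
  have hFnn : ∀ p : ℕ × ℕ, 0 ≤ ((p.1 : ℝ) + 1 + γ) ^ (2 * s) * (u p.1 p.2) ^ 2 :=
    fun p => mul_nonneg (Real.rpow_nonneg (by positivity) _) (sq_nonneg _)
  have hG : Summable (fun q : ℤ × ℕ =>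
      ((nIdx q.1 q.2 : ℝ) + 1 + γ) ^ (2 * s) * (u (nIdx q.1 q.2) (kIdx q.1 q.2)) ^ 2) :=
    (hU.comp_injective sigma_inj).congr fun q => rfl
  have hmarg : ∀ m : ℤ, Summable (fun ℓ : ℕ =>
      ((nIdx m ℓ : ℝ) + 1 + γ) ^ (2 * s) * (u (nIdx m ℓ) (kIdx m ℓ)) ^ 2) :=
    fun m => (hU.comp_injective (sigma_inj_right m)).congr fun ℓ => rfl
  -- the key per-frequency estimate
  have key : ∀ m : ℤ,
      Summable (fun ℓ : ℕ =>
        u (nIdx m ℓ) (kIdx m ℓ) / Real.sqrt (zernikeNormSq γ (nIdx m ℓ) (kIdx m ℓ))) ∧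
      (1 + (m : ℝ) ^ 2) ^ (s - γ - 1) *
          (∑' ℓ : ℕ,
            u (nIdx m ℓ) (kIdx m ℓ) / Real.sqrt (zernikeNormSq γ (nIdx m ℓ) (kIdx m ℓ))) ^ 2
        ≤ ((2 / (Real.pi * Real.Gamma (γ+1)^2)) * ∑' j : ℕ, ((j:ℝ)+1) ^ (-(2*s-1-2*γ))) *
          ∑' ℓ : ℕ, ((nIdx m ℓ : ℝ) + 1 + γ) ^ (2 * s) * (u (nIdx m ℓ) (kIdx m ℓ)) ^ 2 := by
    intro m
    have hkn : ∀ ℓ, kIdx m ℓ ≤ nIdx m ℓ := kIdx_le_nIdx m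
    have hApos : ∀ ℓ : ℕ, 0 < ((nIdx m ℓ : ℝ) + 1 + γ) ^ (2*s) :=
      fun ℓ => Real.rpow_pos_of_pos (by positivity) _
    have hNpos : ∀ ℓ, 0 < zernikeNormSq γ (nIdx m ℓ) (kIdx m ℓ) :=
      fun ℓ => zern_pos hγ0 (hkn ℓ)
    set f : ℕ → ℝ := fun ℓ =>
      (Real.sqrt (((nIdx m ℓ : ℝ) + 1 + γ) ^ (2*s)) *
        Real.sqrt (zernikeNormSq γ (nIdx m ℓ) (kIdx m ℓ)))⁻¹ with hfdef
    set g : ℕ → ℝ := fun ℓ =>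
      Real.sqrt (((nIdx m ℓ : ℝ) + 1 + γ) ^ (2*s)) * u (nIdx m ℓ) (kIdx m ℓ) with hgdef
    have hsA : ∀ ℓ, 0 < Real.sqrt (((nIdx m ℓ : ℝ) + 1 + γ) ^ (2*s)) :=
      fun ℓ => Real.sqrt_pos.mpr (hApos ℓ)
    have hsN : ∀ ℓ, 0 < Real.sqrt (zernikeNormSq γ (nIdx m ℓ) (kIdx m ℓ)) :=
      fun ℓ => Real.sqrt_pos.mpr (hNpos ℓ)
    have hfg : ∀ ℓ, f ℓ * g ℓ =
        u (nIdx m ℓ) (kIdx m ℓ) / Real.sqrt (zernikeNormSq γ (nIdx m ℓ) (kIdx m ℓ)) := by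
      intro ℓ
      rw [hfdef, hgdef]
      field_simp
    have hf2 : ∀ ℓ, f ℓ ^ 2 =
        ((((nIdx m ℓ : ℝ) + 1 + γ) ^ (2*s)))⁻¹ *
          (zernikeNormSq γ (nIdx m ℓ) (kIdx m ℓ))⁻¹ := by
      intro ℓ
      rw [hfdef]
      simp [mul_pow, Real.sq_sqrt (hApos ℓ).le, Real.sq_sqrt (hNpos ℓ).le, mul_inv]
      ring
    have hg2 : ∀ ℓ, g ℓ ^ 2 =
        ((nIdx m ℓ : ℝ) + 1 + γ) ^ (2 * s) * (u (nIdx m ℓ) (kIdx m ℓ)) ^ 2 := by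
      intro ℓ
      rw [hgdef]
      simp [mul_pow, Real.sq_sqrt (hApos ℓ).le]
    have hcast : ∀ ℓ : ℕ, ((nIdx m ℓ : ℝ)) = ((m.natAbs : ℝ) + 2*ℓ) := by
      intro ℓ
      simp only [nIdx]
      push_cast
      ring
    have hfb : ∀ ℓ, f ℓ ^ 2 ≤
        (2 / (Real.pi * Real.Gamma (γ+1)^2)) * ((m.natAbs:ℝ) + 2*ℓ + 1) ^ (-(2*s-1-2*γ)) := by
      intro ℓ
      rw [hf2 ℓ, hcast ℓ]
      have h := wBound hγ0 hγ1 hs (hkn ℓ)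
      rw [hcast ℓ] at h
      exact h
    have hφ := tail_bound_s19 ht1 m.natAbs
    have hf2sum : Summable (fun ℓ => f ℓ ^ 2) :=
      Summable.of_nonneg_of_le (fun ℓ => sq_nonneg _) hfb (hφ.1.mul_left _)
    have hg2sum : Summable (fun ℓ => g ℓ ^ 2) := (hmarg m).congr fun ℓ => (hg2 ℓ).symm
    have CS := tsum_cauchy_schwarz f g hf2sum hg2sum
    have hsum_v : Summable (fun ℓ : ℕ =>
        u (nIdx m ℓ) (kIdx m ℓ) / Real.sqrt (zernikeNormSq γ (nIdx m ℓ) (kIdx m ℓ))) :=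
      CS.1.congr hfg
    refine ⟨hsum_v, ?_⟩
    have hV : (∑' ℓ : ℕ,
        u (nIdx m ℓ) (kIdx m ℓ) / Real.sqrt (zernikeNormSq γ (nIdx m ℓ) (kIdx m ℓ)))
        = ∑' ℓ, f ℓ * g ℓ := tsum_congr fun ℓ => (hfg ℓ).symm
    rw [hV]
    have hTnn : 0 ≤ ∑' ℓ, g ℓ ^ 2 := tsum_nonneg fun ℓ => sq_nonneg _
    have hf2nn : 0 ≤ ∑' ℓ, f ℓ ^ 2 := tsum_nonneg fun ℓ => sq_nonneg _
    have hFle : ∑' ℓ, f ℓ ^ 2 ≤ (2 / (Real.pi * Real.Gamma (γ+1)^2)) *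
        ((∑' j : ℕ, ((j:ℝ)+1) ^ (-(2*s-1-2*γ))) * ((m.natAbs:ℝ)+1) ^ (1-(2*s-1-2*γ))) := by
      calc ∑' ℓ, f ℓ ^ 2
          ≤ ∑' ℓ : ℕ, (2 / (Real.pi * Real.Gamma (γ+1)^2)) *
            ((m.natAbs:ℝ) + 2*ℓ + 1) ^ (-(2*s-1-2*γ)) :=
            Summable.tsum_le_tsum hfb hf2sum (hφ.1.mul_left _)
        _ = (2 / (Real.pi * Real.Gamma (γ+1)^2)) *
            ∑' ℓ : ℕ, ((m.natAbs:ℝ) + 2*ℓ + 1) ^ (-(2*s-1-2*γ)) := tsum_mul_left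
        _ ≤ _ := mul_le_mul_of_nonneg_left hφ.2 hB.le
    have hwt : (1 + (m : ℝ) ^ 2) ^ (s - γ - 1) ≤ ((m.natAbs:ℝ)+1) ^ ((2*s-1-2*γ)-1) := by
      exact weight_le (by linarith : (0:ℝ) ≤ s - γ - 1) m
    have hwnn : (0:ℝ) ≤ (1 + (m : ℝ) ^ 2) ^ (s - γ - 1) := Real.rpow_nonneg (by positivity) _
    have hTeq : (∑' ℓ, g ℓ ^ 2) =
        ∑' ℓ : ℕ, ((nIdx m ℓ : ℝ) + 1 + γ) ^ (2 * s) * (u (nIdx m ℓ) (kIdx m ℓ)) ^ 2 :=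
      tsum_congr fun ℓ => hg2 ℓ
    have hpow : ((m.natAbs:ℝ)+1) ^ ((2*s-1-2*γ)-1) * ((m.natAbs:ℝ)+1) ^ (1-(2*s-1-2*γ)) = 1 := by
      rw [← Real.rpow_add (by positivity)]
      norm_num
    calc (1 + (m : ℝ) ^ 2) ^ (s - γ - 1) * (∑' ℓ, f ℓ * g ℓ) ^ 2
        ≤ (1 + (m : ℝ) ^ 2) ^ (s - γ - 1) * ((∑' ℓ, f ℓ ^ 2) * (∑' ℓ, g ℓ ^ 2)) :=
          mul_le_mul_of_nonneg_left CS.2 hwnn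
      _ ≤ ((m.natAbs:ℝ)+1) ^ ((2*s-1-2*γ)-1) *
            (((2 / (Real.pi * Real.Gamma (γ+1)^2)) *
              ((∑' j : ℕ, ((j:ℝ)+1) ^ (-(2*s-1-2*γ))) *
                ((m.natAbs:ℝ)+1) ^ (1-(2*s-1-2*γ)))) * (∑' ℓ, g ℓ ^ 2)) := by
          apply mul_le_mul hwt (mul_le_mul_of_nonneg_right hFle hTnn)
            (mul_nonneg hf2nn hTnn) (Real.rpow_nonneg (by positivity) _)
      _ = ((2 / (Real.pi * Real.Gamma (γ+1)^2)) *
            ∑' j : ℕ, ((j:ℝ)+1) ^ (-(2*s-1-2*γ))) *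
            ((((m.natAbs:ℝ)+1) ^ ((2*s-1-2*γ)-1) * ((m.natAbs:ℝ)+1) ^ (1-(2*s-1-2*γ))) *
              (∑' ℓ, g ℓ ^ 2)) := by ring
      _ = ((2 / (Real.pi * Real.Gamma (γ+1)^2)) *
            ∑' j : ℕ, ((j:ℝ)+1) ^ (-(2*s-1-2*γ))) *
            ∑' ℓ : ℕ, ((nIdx m ℓ : ℝ) + 1 + γ) ^ (2 * s) * (u (nIdx m ℓ) (kIdx m ℓ)) ^ 2 := by
          rw [hpow, one_mul, hTeq]
  refine ⟨fun m => (key m).1, ?_, ?_⟩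
  · -- summability in m
    have hT : Summable (fun m : ℤ => ∑' ℓ : ℕ,
        ((nIdx m ℓ : ℝ) + 1 + γ) ^ (2 * s) * (u (nIdx m ℓ) (kIdx m ℓ)) ^ 2) :=
      ((summable_prod_of_nonneg (fun q : ℤ × ℕ => hFnn (nIdx q.1 q.2, kIdx q.1 q.2))).mp hG).2
    exact Summable.of_nonneg_of_le
      (fun m => mul_nonneg (Real.rpow_nonneg (by positivity) _) (sq_nonneg _))
      (fun m => (key m).2) (hT.mul_left _)
  · -- the final estimate
    have hT : Summable (fun m : ℤ => ∑' ℓ : ℕ,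
        ((nIdx m ℓ : ℝ) + 1 + γ) ^ (2 * s) * (u (nIdx m ℓ) (kIdx m ℓ)) ^ 2) :=
      ((summable_prod_of_nonneg (fun q : ℤ × ℕ => hFnn (nIdx q.1 q.2, kIdx q.1 q.2))).mp hG).2
    have hsum2 : Summable (fun m : ℤ => (1 + (m : ℝ) ^ 2) ^ (s - γ - 1) *
        (∑' ℓ : ℕ,
          u (nIdx m ℓ) (kIdx m ℓ) / Real.sqrt (zernikeNormSq γ (nIdx m ℓ) (kIdx m ℓ))) ^ 2) :=
      Summable.of_nonneg_of_le
        (fun m => mul_nonneg (Real.rpow_nonneg (by positivity) _) (sq_nonneg _))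
        (fun m => (key m).2) (hT.mul_left _)
    calc ∑' m : ℤ, (1 + (m : ℝ) ^ 2) ^ (s - γ - 1) *
          (∑' ℓ : ℕ,
            u (nIdx m ℓ) (kIdx m ℓ) / Real.sqrt (zernikeNormSq γ (nIdx m ℓ) (kIdx m ℓ))) ^ 2
        ≤ ∑' m : ℤ, ((2 / (Real.pi * Real.Gamma (γ+1)^2)) *
            ∑' j : ℕ, ((j:ℝ)+1) ^ (-(2*s-1-2*γ))) *
            ∑' ℓ : ℕ, ((nIdx m ℓ : ℝ) + 1 + γ) ^ (2 * s) * (u (nIdx m ℓ) (kIdx m ℓ)) ^ 2 :=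
          Summable.tsum_le_tsum (fun m => (key m).2) hsum2 (hT.mul_left _)
      _ = ((2 / (Real.pi * Real.Gamma (γ+1)^2)) *
            ∑' j : ℕ, ((j:ℝ)+1) ^ (-(2*s-1-2*γ))) *
            ∑' m : ℤ, ∑' ℓ : ℕ,
              ((nIdx m ℓ : ℝ) + 1 + γ) ^ (2 * s) * (u (nIdx m ℓ) (kIdx m ℓ)) ^ 2 := tsum_mul_left
      _ ≤ _ := by
          apply mul_le_mul_of_nonneg_left ?_ (mul_pos hB hK).le
          have e1 : ∑' m : ℤ, ∑' ℓ : ℕ,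
              ((nIdx m ℓ : ℝ) + 1 + γ) ^ (2 * s) * (u (nIdx m ℓ) (kIdx m ℓ)) ^ 2
              = ∑' q : ℤ × ℕ,
                ((nIdx q.1 q.2 : ℝ) + 1 + γ) ^ (2 * s) * (u (nIdx q.1 q.2) (kIdx q.1 q.2)) ^ 2 :=
            (Summable.tsum_prod' hG fun m => hmarg m).symm
          rw [e1]
          exact Summable.tsum_le_tsum_of_inj (fun q : ℤ × ℕ => (nIdx q.1 q.2, kIdx q.1 q.2)) sigma_inj
            (fun c _ => hFnn c) (fun q => le_rfl) hG hU
end
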